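/- arXiv:2001.06367 — 4 statements merged into one kernel-verified Lean document; each statement's English description precedes it below -/
import Mathlib

section
/- Let K*_{n,n} be the graph obtained from the complete bipartite graph K_{n,n} by deleting the edges of a perfect matching. Then cn_ℓ(𝔅ℭ, K*_{n,n}) ≤ cn_ℓ(𝔅ℭ, K_n) ≤ 2 · cn_ℓ(𝔅ℭ, K*_{n,n}); consequently cn_ℓ(𝔅ℭ, K*_{n,n}) = Θ(log n). -/
open SimpleGraph

/-- A graph is complete bipartite if its vertex set splits into two disjoint
parts `A, B` and its edges are exactly all pairs between `A` and `B`. -/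
def IsCompleteBipartite {W : Type*} (G : SimpleGraph W) : Prop :=
  ∃ A B : Set W, Disjoint A B ∧ A ∪ B = Set.univ ∧
    ∀ u v : W, G.Adj u v ↔ ((u ∈ A ∧ v ∈ B) ∨ (u ∈ B ∧ v ∈ A))

/-- A difference graph: a bipartite graph (with parts `A, B`) in which the
neighbourhoods of the vertices of `A` are linearly ordered by inclusion
(equivalently, the vertices of `A` can be ordered `a₁, …, a_r` with
`N(aᵢ) ⊆ N(a_{i-1})`). -/
def IsDifferenceGraph {W : Type*} (G : SimpleGraph W) : Prop :=
  ∃ A B : Set W, Disjoint A B ∧ A ∪ B = Set.univ ∧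
    (∀ u v : W, G.Adj u v → ((u ∈ A ∧ v ∈ B) ∨ (u ∈ B ∧ v ∈ A))) ∧
    ∀ a ∈ A, ∀ a' ∈ A,
      G.neighborSet a ⊆ G.neighborSet a' ∨ G.neighborSet a' ⊆ G.neighborSet a

open scoped Classical in
/-- The local covering number of `H` with respect to the class of subgraphs
satisfying `P`: the least `k` such that there is a set `C` of subgraphs of `H`,
each in the class, whose union is `H`, and such that every vertex of `H` lies
in at most `k` members of `C`. -/
noncomputable def localCoverNumber {V : Type*} (H : SimpleGraph V)
    (P : H.Subgraph → Prop) : ℕ :=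
  sInf {k | ∃ C : Finset H.Subgraph, (∀ G ∈ C, P G) ∧ C.sup id = ⊤ ∧
    ∀ v : V, (C.filter fun G => v ∈ G.verts).card ≤ k}

/-- The local complete-bipartite covering number `cn_ℓ(𝔅ℭ, H)`. -/
noncomputable def cbCN {V : Type*} (H : SimpleGraph V) : ℕ :=
  localCoverNumber H fun G => IsCompleteBipartite G.coe

/-- The local difference-graph covering number `cn_ℓ(𝔇, H)`. -/
noncomputable def diffCN {V : Type*} (H : SimpleGraph V) : ℕ :=
  localCoverNumber H fun G => IsDifferenceGraph G.coe

/-- `K*_{n,n}`: the complete bipartite graph `K_{n,n}` minus a perfect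
matching; `aᵢ = inl i` is adjacent to `bⱼ = inr j` iff `i ≠ j`. -/
def Kstar (n : ℕ) : SimpleGraph (Fin n ⊕ Fin n) where
  Adj x y := ∃ i j : Fin n, i ≠ j ∧
    ((x = Sum.inl i ∧ y = Sum.inr j) ∨ (x = Sum.inr j ∧ y = Sum.inl i))
  symm := by
    constructor
    intro x y h
    obtain ⟨i, j, hij, h | h⟩ := h
    · exact ⟨i, j, hij, Or.inr ⟨h.2, h.1⟩⟩
    · exact ⟨i, j, hij, Or.inl ⟨h.2, h.1⟩⟩
  loopless := by
    constructor
    intro x h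
    obtain ⟨i, j, hij, ⟨h1, h2⟩ | ⟨h1, h2⟩⟩ := h <;> simp_all

section Aux
variable {V : Type*} {H : SimpleGraph V}

/-- The biclique subgraph between `S` and `T` (only edges present in `H`). -/
def biclique (H : SimpleGraph V) (S T : Set V) : H.Subgraph where
  verts := S ∪ T
  Adj u v := ((u ∈ S ∧ v ∈ T) ∨ (u ∈ T ∧ v ∈ S)) ∧ H.Adj u v
  adj_sub h := h.2
  edge_vert h := by rcases h.1 with ⟨h1, _⟩ | ⟨h1, _⟩
                    exacts [Or.inl h1, Or.inr h1]
  symm := by constructor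
             rintro u v ⟨h | h, hadj⟩
             exacts [⟨Or.inr ⟨h.2, h.1⟩, hadj.symm⟩, ⟨Or.inl ⟨h.2, h.1⟩, hadj.symm⟩]

lemma biclique_verts (S T : Set V) : (biclique H S T).verts = S ∪ T := rfl

lemma biclique_adj {S T : Set V} {u v : V} :
    (biclique H S T).Adj u v ↔ ((u ∈ S ∧ v ∈ T) ∨ (u ∈ T ∧ v ∈ S)) ∧ H.Adj u v := Iff.rfl

lemma biclique_isCB {S T : Set V} (hadj : ∀ s ∈ S, ∀ t ∈ T, H.Adj s t) :
    IsCompleteBipartite (biclique H S T).coe := by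
  have hd : ∀ x, x ∈ S → x ∈ T → False := fun x hS hT => H.loopless.irrefl x (hadj x hS x hT)
  refine ⟨{x | (x : V) ∈ S}, {x | (x : V) ∈ T ∧ (x : V) ∉ S}, ?_, ?_, ?_⟩
  · rw [Set.disjoint_left]; rintro x hx ⟨_, hx2⟩; exact hx2 hx
  · ext x
    rcases x.2 with h | h
    · simp only [Set.mem_union, Set.mem_setOf_eq, Set.mem_univ, iff_true]
      exact Or.inl h
    · simp only [Set.mem_union, Set.mem_setOf_eq, Set.mem_univ, iff_true]
      by_cases hS : (x : V) ∈ S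
      · exact Or.inl hS
      · exact Or.inr ⟨h, hS⟩
  · intro u v
    rw [Subgraph.coe_adj, biclique_adj]
    constructor
    · rintro ⟨⟨h1, h2⟩ | ⟨h1, h2⟩, _⟩
      · exact Or.inl ⟨h1, h2, fun hv => hd _ hv h2⟩
      · exact Or.inr ⟨⟨h1, fun hu => hd _ hu h1⟩, h2⟩
    · rintro (⟨h1, h2, _⟩ | ⟨⟨h1, _⟩, h2⟩)
      · exact ⟨Or.inl ⟨h1, h2⟩, hadj _ h1 _ h2⟩
      · exact ⟨Or.inr ⟨h1, h2⟩, (hadj _ h2 _ h1).symm⟩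

/-- Extract the two parts of a subgraph whose coercion is complete bipartite,
as sets of the ambient vertex type. -/
lemma exists_parts (G : H.Subgraph) (h : IsCompleteBipartite G.coe) :
    ∃ S T : Set V, S ∪ T = G.verts ∧ Disjoint S T ∧
      (∀ u v, G.Adj u v ↔ ((u ∈ S ∧ v ∈ T) ∨ (u ∈ T ∧ v ∈ S))) := by
  obtain ⟨A, B, hd, huniv, hiff⟩ := h
  refine ⟨Subtype.val '' A, Subtype.val '' B, ?_, ?_, ?_⟩
  · rw [← Set.image_union, huniv, Subtype.coe_image_univ]
  · exact (Set.disjoint_image_iff Subtype.val_injective).2 hd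
  · intro u v
    constructor
    · intro hadj
      have hu : u ∈ G.verts := G.edge_vert hadj
      have hv : v ∈ G.verts := G.edge_vert hadj.symm
      have : G.coe.Adj ⟨u, hu⟩ ⟨v, hv⟩ := hadj
      rcases (hiff _ _).1 this with ⟨h1, h2⟩ | ⟨h1, h2⟩
      · exact Or.inl ⟨⟨_, h1, rfl⟩, ⟨_, h2, rfl⟩⟩
      · exact Or.inr ⟨⟨_, h1, rfl⟩, ⟨_, h2, rfl⟩⟩
    · rintro (⟨⟨a, ha, rfl⟩, ⟨b, hb, rfl⟩⟩ | ⟨⟨a, ha, rfl⟩, ⟨b, hb, rfl⟩⟩)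
      · exact (hiff a b).2 (Or.inl ⟨ha, hb⟩)
      · exact (hiff a b).2 (Or.inr ⟨ha, hb⟩)

/-- Chosen parts of a subgraph. -/
noncomputable def partsOf (G : H.Subgraph) : Set V × Set V := by
  classical
  exact if h : IsCompleteBipartite G.coe then
    ⟨(exists_parts G h).choose, (exists_parts G h).choose_spec.choose⟩
  else ⟨∅, ∅⟩

lemma partsOf_spec (G : H.Subgraph) (h : IsCompleteBipartite G.coe) :
    (partsOf G).1 ∪ (partsOf G).2 = G.verts ∧ Disjoint (partsOf G).1 (partsOf G).2 ∧
      (∀ u v, G.Adj u v ↔ ((u ∈ (partsOf G).1 ∧ v ∈ (partsOf G).2) ∨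
        (u ∈ (partsOf G).2 ∧ v ∈ (partsOf G).1))) := by
  classical
  rw [partsOf]
  simp only [dif_pos h]
  exact (exists_parts G h).choose_spec.choose_spec

lemma sup_eq_top_of (C : Finset H.Subgraph) (hv : ∀ v : V, ∃ G ∈ C, v ∈ G.verts)
    (he : ∀ u v : V, H.Adj u v → ∃ G ∈ C, G.Adj u v) : C.sup id = ⊤ := by
  rw [Finset.sup_id_eq_sSup]
  apply Subgraph.ext
  · rw [Subgraph.verts_sSup]
    ext v
    simp only [Set.mem_iUnion, Subgraph.verts_top, Set.mem_univ, iff_true]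
    obtain ⟨G, hG, hvG⟩ := hv v
    exact ⟨G, hG, hvG⟩
  · ext u v
    rw [Subgraph.sSup_adj]
    simp only [Subgraph.top_adj]
    constructor
    · rintro ⟨G, _, hadj⟩; exact G.adj_sub hadj
    · intro h; exact he u v h

lemma verts_of_sup_eq_top {C : Finset H.Subgraph} (h : C.sup id = ⊤) (v : V) :
    ∃ G ∈ C, v ∈ G.verts := by
  have : v ∈ (C.sup id).verts := by rw [h]; trivial
  rw [Finset.sup_id_eq_sSup, Subgraph.verts_sSup] at this
  simpa using this

lemma adj_of_sup_eq_top {C : Finset H.Subgraph} (h : C.sup id = ⊤) {u v : V}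
    (hadj : H.Adj u v) : ∃ G ∈ C, G.Adj u v := by
  have : (C.sup id).Adj u v := by rw [h]; exact hadj
  rw [Finset.sup_id_eq_sSup, Subgraph.sSup_adj] at this
  simpa using this

end Aux

open scoped Classical in
def coverSet {V : Type*} (H : SimpleGraph V) (P : H.Subgraph → Prop) : Set ℕ :=
  {k | ∃ C : Finset H.Subgraph, (∀ G ∈ C, P G) ∧ C.sup id = ⊤ ∧
    ∀ v : V, (C.filter fun G => v ∈ G.verts).card ≤ k}

lemma cbCN_eq {V : Type*} (H : SimpleGraph V) :
    cbCN H = sInf (coverSet H (fun G => IsCompleteBipartite G.coe)) := rfl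

section KSsec
open scoped Classical in
lemma KS {n k : ℕ} (C : Finset (⊤ : SimpleGraph (Fin n)).Subgraph)
    (hP : ∀ G ∈ C, IsCompleteBipartite G.coe) (hsup : C.sup id = ⊤)
    (hloc : ∀ v, (C.filter fun G => v ∈ G.verts).card ≤ k) : n ≤ 2 ^ k := by
  classical
  set t := C.card with ht
  set σ : (⊤ : SimpleGraph (Fin n)).Subgraph → Fin n → Bool :=
    fun G v => if v ∈ (partsOf G).1 then true else false with hσ
  set surv : ({G // G ∈ C} → Bool) → Fin n → Prop :=
    fun f v => ∀ G : {G // G ∈ C}, v ∈ (G : (⊤ : SimpleGraph (Fin n)).Subgraph).verts →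
      f G = σ G v with hsurv
  have key1 : ∀ f, (Finset.univ.filter fun v => surv f v).card ≤ 1 := by
    intro f
    rw [Finset.card_le_one]
    intro u hu v hv
    by_contra hne
    have htop : (⊤ : SimpleGraph (Fin n)).Adj u v := by simpa using hne
    obtain ⟨G, hGC, hadj⟩ := adj_of_sup_eq_top hsup htop
    obtain ⟨hun, hdis, hiff⟩ := partsOf_spec G (hP G hGC)
    simp only [Finset.mem_filter] at hu hv
    have hu' := hu.2 ⟨G, hGC⟩ (G.edge_vert hadj)
    have hv' := hv.2 ⟨G, hGC⟩ (G.edge_vert hadj.symm)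
    have hσne : σ G u ≠ σ G v := by
      rcases (hiff u v).1 hadj with ⟨h1, h2⟩ | ⟨h1, h2⟩
      · have e1 : σ G u = true := if_pos h1
        have e2 : σ G v = false := if_neg (fun hv2 => Set.disjoint_left.1 hdis hv2 h2)
        rw [e1, e2]; simp
      · have e1 : σ G u = false := if_neg (fun hu2 => Set.disjoint_left.1 hdis hu2 h1)
        have e2 : σ G v = true := if_pos h2
        rw [e1, e2]; simp
    exact hσne (hu' ▸ hv' ▸ rfl)
  have key2 : ∀ v : Fin n,
      2 ^ (t - k) ≤ (Finset.univ.filter fun f : {G // G ∈ C} → Bool => surv f v).card := by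
    intro v
    set D : Finset {G // G ∈ C} :=
      Finset.univ.filter (fun G => v ∈ (G : (⊤ : SimpleGraph (Fin n)).Subgraph).verts) with hD
    have hDk : D.card ≤ k := by
      refine le_trans ?_ (hloc v)
      refine Finset.card_le_card_of_injOn
        (fun G => (G : (⊤ : SimpleGraph (Fin n)).Subgraph)) ?_ ?_
      · intro G hG
        simp only [hD, Finset.mem_filter, Finset.mem_univ, true_and] at hG
        exact Finset.mem_filter.2 ⟨G.2, by simpa [hD] using hG⟩
      · intro a _ b _ hab
        exact Subtype.ext hab
    set Φ : ({G // G ∈ Dᶜ} → Bool) → ({G // G ∈ C} → Bool) :=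
      fun h G => if hG : G ∈ Dᶜ then h ⟨G, hG⟩ else σ G v with hΦ
    have hcard : ((Finset.univ : Finset ({G // G ∈ Dᶜ} → Bool))).card = 2 ^ (Dᶜ.card) := by
      rw [Finset.card_univ, Fintype.card_fun]
      rw [Fintype.card_bool, Fintype.card_coe]
    have hle : ((Finset.univ : Finset ({G // G ∈ Dᶜ} → Bool))).card ≤
        (Finset.univ.filter fun f : {G // G ∈ C} → Bool => surv f v).card := by
      apply Finset.card_le_card_of_injOn Φ
      · intro h _
        refine Finset.mem_filter.2 ⟨Finset.mem_univ _, ?_⟩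
        intro G hGv
        have hGD : G ∈ D := by simp [hD, hGv]
        have hnc : ¬ G ∈ Dᶜ := by simp [Finset.mem_compl, hGD]
        show (if hG : G ∈ Dᶜ then h ⟨G, hG⟩ else σ G v) = σ G v
        rw [dif_neg hnc]
      · intro h1 _ h2 _ h12
        funext x
        have := congrFun h12 (x : {G // G ∈ C})
        simp only [hΦ] at this
        rw [dif_pos x.2, Subtype.coe_eta] at this
        rw [this, dif_pos x.2, Subtype.coe_eta]
    calc 2 ^ (t - k) ≤ 2 ^ (Dᶜ.card) := by
          apply Nat.pow_le_pow_right (by norm_num)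
          rw [Finset.card_compl, Fintype.card_coe]
          exact Nat.sub_le_sub_left hDk t
      _ ≤ _ := hcard ▸ hle
  -- double counting
  have hdc : (n : ℕ) * 2 ^ (t - k) ≤ 2 ^ t := by
    have e1 : ∀ v : Fin n, (Finset.univ.filter fun f : {G // G ∈ C} → Bool => surv f v).card
        = ∑ f : {G // G ∈ C} → Bool, if surv f v then 1 else 0 := by
      intro v; rw [Finset.card_filter]
    have e2 : ∀ f : {G // G ∈ C} → Bool, (Finset.univ.filter fun v => surv f v).card
        = ∑ v : Fin n, if surv f v then 1 else 0 := by
      intro f; rw [Finset.card_filter]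
    calc (n : ℕ) * 2 ^ (t - k) = ∑ _v : Fin n, 2 ^ (t - k) := by
          simp [Finset.sum_const, Finset.card_univ, mul_comm]
      _ ≤ ∑ v : Fin n, (Finset.univ.filter fun f : {G // G ∈ C} → Bool => surv f v).card :=
          Finset.sum_le_sum (fun v _ => key2 v)
      _ = ∑ v : Fin n, ∑ f : {G // G ∈ C} → Bool, if surv f v then 1 else 0 := by
          simp only [e1]
      _ = ∑ f : {G // G ∈ C} → Bool, ∑ v : Fin n, if surv f v then 1 else 0 :=
          Finset.sum_comm
      _ = ∑ f : {G // G ∈ C} → Bool, (Finset.univ.filter fun v => surv f v).card := by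
          simp only [e2]
      _ ≤ ∑ _f : {G // G ∈ C} → Bool, 1 := Finset.sum_le_sum (fun f _ => key1 f)
      _ = 2 ^ t := by
          rw [Finset.sum_const, smul_eq_mul, mul_one, Finset.card_univ, Fintype.card_fun]
          simp [Fintype.card_coe, ht]
  rcases le_or_gt k t with hkt | hkt
  · have : 2 ^ t = 2 ^ (t - k) * 2 ^ k := by
      rw [← pow_add, Nat.sub_add_cancel hkt]
    rw [this, mul_comm (2 ^ (t-k))] at hdc
    exact Nat.le_of_mul_le_mul_right hdc (Nat.pow_pos (by norm_num))
  · have : t - k = 0 := Nat.sub_eq_zero_of_le hkt.le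
    rw [this, pow_zero, mul_one] at hdc
    exact hdc.trans (Nat.pow_le_pow_right (by norm_num) hkt.le)
end KSsec

-- facts about Kstar adjacency
lemma kstar_adj_inl_inr {n : ℕ} {i j : Fin n} :
    (Kstar n).Adj (Sum.inl i) (Sum.inr j) ↔ i ≠ j := by
  constructor
  · rintro ⟨a, b, hab, ⟨h1, h2⟩ | ⟨h1, h2⟩⟩ <;> simp_all
  · intro h; exact ⟨i, j, h, Or.inl ⟨rfl, rfl⟩⟩

lemma kstar_not_inl_inl {n : ℕ} {i j : Fin n} : ¬ (Kstar n).Adj (Sum.inl i) (Sum.inl j) := by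
  rintro ⟨a, b, hab, ⟨h1, h2⟩ | ⟨h1, h2⟩⟩ <;> simp_all

lemma kstar_not_inr_inr {n : ℕ} {i j : Fin n} : ¬ (Kstar n).Adj (Sum.inr i) (Sum.inr j) := by
  rintro ⟨a, b, hab, ⟨h1, h2⟩ | ⟨h1, h2⟩⟩ <;> simp_all

open scoped Classical in
lemma red1 {n k : ℕ}
    (h : k ∈ coverSet (⊤ : SimpleGraph (Fin n)) (fun G => IsCompleteBipartite G.coe)) :
    k ∈ coverSet (Kstar n) (fun G => IsCompleteBipartite G.coe) := by
  classical
  obtain ⟨C, hP, hsup, hloc⟩ := h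
  set SA : (⊤ : SimpleGraph (Fin n)).Subgraph → Set (Fin n) := fun G => (partsOf G).1 with hSA
  set SB : (⊤ : SimpleGraph (Fin n)).Subgraph → Set (Fin n) := fun G => (partsOf G).2 with hSB
  have spec : ∀ G ∈ C, SA G ∪ SB G = G.verts ∧ Disjoint (SA G) (SB G) ∧
      (∀ u v, G.Adj u v ↔ ((u ∈ SA G ∧ v ∈ SB G) ∨ (u ∈ SB G ∧ v ∈ SA G))) :=
    fun G hG => partsOf_spec G (hP G hG)
  have hne : ∀ G ∈ C, ∀ i ∈ SA G, ∀ j ∈ SB G, i ≠ j := by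
    intro G hG i hi j hj
    exact (⊤ : SimpleGraph (Fin n)).ne_of_adj (G.adj_sub (((spec G hG).2.2 i j).2 (Or.inl ⟨hi, hj⟩)))
  set f₁ : (⊤ : SimpleGraph (Fin n)).Subgraph → (Kstar n).Subgraph :=
    fun G => biclique (Kstar n) (Sum.inl '' SA G) (Sum.inr '' SB G) with hf₁
  set f₂ : (⊤ : SimpleGraph (Fin n)).Subgraph → (Kstar n).Subgraph :=
    fun G => biclique (Kstar n) (Sum.inl '' SB G) (Sum.inr '' SA G) with hf₂
  refine ⟨C.image f₁ ∪ C.image f₂, ?_, ?_, ?_⟩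
  · intro G' hG'
    rcases Finset.mem_union.1 hG' with hm | hm <;> obtain ⟨G, hG, rfl⟩ := Finset.mem_image.1 hm
    · apply biclique_isCB
      rintro x ⟨i, hi, rfl⟩ y ⟨j, hj, rfl⟩
      exact kstar_adj_inl_inr.2 (hne G hG i hi j hj)
    · apply biclique_isCB
      rintro x ⟨j, hj, rfl⟩ y ⟨i, hi, rfl⟩
      exact kstar_adj_inl_inr.2 (Ne.symm (hne G hG i hi j hj))
  · apply sup_eq_top_of
    · intro v
      rcases v with i | j
      · obtain ⟨G, hG, hiG⟩ := verts_of_sup_eq_top hsup i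
        rw [← (spec G hG).1] at hiG
        rcases hiG with hi | hi
        · exact ⟨f₁ G, Finset.mem_union_left _ (Finset.mem_image_of_mem _ hG),
            by rw [hf₁]; rw [biclique_verts]; exact Or.inl ⟨i, hi, rfl⟩⟩
        · exact ⟨f₂ G, Finset.mem_union_right _ (Finset.mem_image_of_mem _ hG),
            by rw [hf₂]; rw [biclique_verts]; exact Or.inl ⟨i, hi, rfl⟩⟩
      · obtain ⟨G, hG, hjG⟩ := verts_of_sup_eq_top hsup j
        rw [← (spec G hG).1] at hjG
        rcases hjG with hj | hj
        · exact ⟨f₂ G, Finset.mem_union_right _ (Finset.mem_image_of_mem _ hG),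
            by rw [hf₂]; rw [biclique_verts]; exact Or.inr ⟨j, hj, rfl⟩⟩
        · exact ⟨f₁ G, Finset.mem_union_left _ (Finset.mem_image_of_mem _ hG),
            by rw [hf₁]; rw [biclique_verts]; exact Or.inr ⟨j, hj, rfl⟩⟩
    · intro x y hxy
      have key : ∀ i j : Fin n, i ≠ j →
          ∃ G' ∈ C.image f₁ ∪ C.image f₂, G'.Adj (Sum.inl i) (Sum.inr j) := by
        intro i j hij
        obtain ⟨G, hG, hadj⟩ := adj_of_sup_eq_top hsup (by simpa using hij :
          (⊤ : SimpleGraph (Fin n)).Adj i j)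
        rcases ((spec G hG).2.2 i j).1 hadj with ⟨h1, h2⟩ | ⟨h1, h2⟩
        · exact ⟨f₁ G, Finset.mem_union_left _ (Finset.mem_image_of_mem _ hG),
            biclique_adj.2 ⟨Or.inl ⟨⟨i, h1, rfl⟩, ⟨j, h2, rfl⟩⟩, kstar_adj_inl_inr.2 hij⟩⟩
        · exact ⟨f₂ G, Finset.mem_union_right _ (Finset.mem_image_of_mem _ hG),
            biclique_adj.2 ⟨Or.inl ⟨⟨i, h1, rfl⟩, ⟨j, h2, rfl⟩⟩, kstar_adj_inl_inr.2 hij⟩⟩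
      obtain ⟨i, j, hij, ⟨rfl, rfl⟩ | ⟨rfl, rfl⟩⟩ := hxy
      · exact key i j hij
      · obtain ⟨G', hG', hadj⟩ := key i j hij
        exact ⟨G', hG', hadj.symm⟩
  · intro v
    have step1 : ((C.image f₁ ∪ C.image f₂).filter fun G' => v ∈ G'.verts).card ≤
        ((C.image f₁).filter fun G' => v ∈ G'.verts).card +
        ((C.image f₂).filter fun G' => v ∈ G'.verts).card := by
      rw [Finset.filter_union]
      exact Finset.card_union_le _ _
    have step2 : ∀ f : (⊤ : SimpleGraph (Fin n)).Subgraph → (Kstar n).Subgraph,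
        ((C.image f).filter fun G' => v ∈ G'.verts).card ≤
        (C.filter fun G => v ∈ (f G).verts).card := by
      intro f
      rw [Finset.filter_image]
      exact Finset.card_image_le
    have main : ∀ p q : (⊤ : SimpleGraph (Fin n)).Subgraph → Set (Fin n), ∀ i : Fin n,
        (∀ G ∈ C, Disjoint (p G) (q G)) → (∀ G ∈ C, p G ∪ q G = G.verts) →
        (C.filter fun G => i ∈ p G).card + (C.filter fun G => i ∈ q G).card ≤ k := by
      intro p q i hdis hun
      have hdisj : Disjoint (C.filter fun G => i ∈ p G) (C.filter fun G => i ∈ q G) := by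
        rw [Finset.disjoint_filter]
        intro G hG h1 h2
        exact Set.disjoint_left.1 (hdis G hG) h1 h2
      rw [← Finset.card_union_of_disjoint hdisj, ← Finset.filter_or]
      refine le_trans (Finset.card_le_card ?_) (hloc i)
      intro G hG
      rw [Finset.mem_filter] at hG ⊢
      refine ⟨hG.1, ?_⟩
      rw [← hun G hG.1]
      rcases hG.2 with h | h
      exacts [Or.inl h, Or.inr h]
    rcases v with i | j
    · have m1 : (C.filter fun G => Sum.inl i ∈ (f₁ G).verts).card ≤
          (C.filter fun G => i ∈ SA G).card := by
        apply Finset.card_le_card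
        intro G hG
        rw [Finset.mem_filter] at hG ⊢
        refine ⟨hG.1, ?_⟩
        have h2 := hG.2
        rw [hf₁, biclique_verts] at h2
        rcases h2 with ⟨a, ha, hai⟩ | ⟨a, ha, hai⟩
        · obtain rfl := Sum.inl_injective hai; exact ha
        · exact absurd hai (by simp)
      have m2 : (C.filter fun G => Sum.inl i ∈ (f₂ G).verts).card ≤
          (C.filter fun G => i ∈ SB G).card := by
        apply Finset.card_le_card
        intro G hG
        rw [Finset.mem_filter] at hG ⊢
        refine ⟨hG.1, ?_⟩
        have h2 := hG.2
        rw [hf₂, biclique_verts] at h2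
        rcases h2 with ⟨a, ha, hai⟩ | ⟨a, ha, hai⟩
        · obtain rfl := Sum.inl_injective hai; exact ha
        · exact absurd hai (by simp)
      refine le_trans step1 (le_trans
        (Nat.add_le_add (le_trans (step2 f₁) m1) (le_trans (step2 f₂) m2)) ?_)
      exact main SA SB i (fun G hG => (spec G hG).2.1) (fun G hG => (spec G hG).1)
    · have m1 : (C.filter fun G => Sum.inr j ∈ (f₁ G).verts).card ≤
          (C.filter fun G => j ∈ SB G).card := by
        apply Finset.card_le_card
        intro G hG
        rw [Finset.mem_filter] at hG ⊢
        refine ⟨hG.1, ?_⟩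
        have h2 := hG.2
        rw [hf₁, biclique_verts] at h2
        rcases h2 with ⟨a, ha, hai⟩ | ⟨a, ha, hai⟩
        · exact absurd hai (by simp)
        · obtain rfl := Sum.inr_injective hai; exact ha
      have m2 : (C.filter fun G => Sum.inr j ∈ (f₂ G).verts).card ≤
          (C.filter fun G => j ∈ SA G).card := by
        apply Finset.card_le_card
        intro G hG
        rw [Finset.mem_filter] at hG ⊢
        refine ⟨hG.1, ?_⟩
        have h2 := hG.2
        rw [hf₂, biclique_verts] at h2
        rcases h2 with ⟨a, ha, hai⟩ | ⟨a, ha, hai⟩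
        · exact absurd hai (by simp)
        · obtain rfl := Sum.inr_injective hai; exact ha
      refine le_trans step1 (le_trans
        (Nat.add_le_add (le_trans (step2 f₁) m1) (le_trans (step2 f₂) m2)) ?_)
      exact main SB SA j (fun G hG => ((spec G hG).2.1).symm)
        (fun G hG => (Set.union_comm _ _).trans (spec G hG).1)

open scoped Classical in
lemma red2 {n k : ℕ}
    (h : k ∈ coverSet (Kstar n) (fun G => IsCompleteBipartite G.coe)) :
    2 * k ∈ coverSet (⊤ : SimpleGraph (Fin n)) (fun G => IsCompleteBipartite G.coe) := by
  classical
  obtain ⟨C, hP, hsup, hloc⟩ := h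
  set S : (Kstar n).Subgraph → Set (Fin n ⊕ Fin n) := fun G => (partsOf G).1 with hS
  set T : (Kstar n).Subgraph → Set (Fin n ⊕ Fin n) := fun G => (partsOf G).2 with hT
  have spec : ∀ G ∈ C, S G ∪ T G = G.verts ∧ Disjoint (S G) (T G) ∧
      (∀ u v, G.Adj u v ↔ ((u ∈ S G ∧ v ∈ T G) ∨ (u ∈ T G ∧ v ∈ S G))) :=
    fun G hG => partsOf_spec G (hP G hG)
  set PX : (Kstar n).Subgraph → Set (Fin n) :=
    fun G => {i | Sum.inl i ∈ S G ∨ Sum.inr i ∈ S G} with hPX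
  set PY : (Kstar n).Subgraph → Set (Fin n) :=
    fun G => {i | Sum.inl i ∈ T G ∨ Sum.inr i ∈ T G} with hPY
  set g : (Kstar n).Subgraph → (⊤ : SimpleGraph (Fin n)).Subgraph :=
    fun G => biclique ⊤ (PX G) (PY G) with hg
  have hadjST : ∀ G ∈ C, ∀ x ∈ S G, ∀ y ∈ T G, (Kstar n).Adj x y := by
    intro G hG x hx y hy
    exact G.adj_sub (((spec G hG).2.2 x y).2 (Or.inl ⟨hx, hy⟩))
  have hPXY : ∀ G ∈ C, ∀ i ∈ PX G, ∀ j ∈ PY G, (⊤ : SimpleGraph (Fin n)).Adj i j := by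
    intro G hG i hi j hj
    have : i ≠ j := by
      rintro rfl
      rcases hi with hi | hi <;> rcases hj with hj | hj
      · exact kstar_not_inl_inl (hadjST G hG _ hi _ hj)
      · exact absurd (kstar_adj_inl_inr.1 (hadjST G hG _ hi _ hj)) (by simp)
      · exact absurd (kstar_adj_inl_inr.1 (hadjST G hG _ hi _ hj).symm) (by simp)
      · exact kstar_not_inr_inr (hadjST G hG _ hi _ hj)
    simpa using this
  refine ⟨C.image g, ?_, ?_, ?_⟩
  · intro G' hG'
    obtain ⟨G, hG, rfl⟩ := Finset.mem_image.1 hG'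
    exact biclique_isCB (hPXY G hG)
  · apply sup_eq_top_of
    · intro i
      obtain ⟨G, hG, hiG⟩ := verts_of_sup_eq_top hsup (Sum.inl i)
      rw [← (spec G hG).1] at hiG
      refine ⟨g G, Finset.mem_image_of_mem _ hG, ?_⟩
      rw [hg, biclique_verts]
      rcases hiG with hi | hi
      · exact Or.inl (Or.inl hi)
      · exact Or.inr (Or.inl hi)
    · intro i j hij
      have hij' : i ≠ j := by simpa using hij
      obtain ⟨G, hG, hadj⟩ := adj_of_sup_eq_top hsup (kstar_adj_inl_inr.2 hij')
      refine ⟨g G, Finset.mem_image_of_mem _ hG, ?_⟩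
      rw [hg]
      rcases ((spec G hG).2.2 _ _).1 hadj with ⟨h1, h2⟩ | ⟨h1, h2⟩
      · exact biclique_adj.2 ⟨Or.inl ⟨Or.inl h1, Or.inr h2⟩, hij⟩
      · exact biclique_adj.2 ⟨Or.inr ⟨Or.inl h1, Or.inr h2⟩, hij⟩
  · intro i
    have step2 : ((C.image g).filter fun G' => i ∈ G'.verts).card ≤
        (C.filter fun G => i ∈ (g G).verts).card := by
      rw [Finset.filter_image]
      exact Finset.card_image_le
    refine le_trans step2 ?_
    have sub : (C.filter fun G => i ∈ (g G).verts) ⊆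
        (C.filter fun G => Sum.inl i ∈ G.verts) ∪ (C.filter fun G => Sum.inr i ∈ G.verts) := by
      intro G hG
      rw [Finset.mem_filter] at hG
      have h2 := hG.2
      rw [hg, biclique_verts] at h2
      rw [Finset.mem_union, Finset.mem_filter, Finset.mem_filter]
      have hv : ∀ x, x ∈ S G ∨ x ∈ T G → x ∈ G.verts := by
        intro x hx
        rw [← (spec G hG.1).1]
        rcases hx with h | h
        exacts [Or.inl h, Or.inr h]
      rcases h2 with (h | h) | (h | h)
      · exact Or.inl ⟨hG.1, hv _ (Or.inl h)⟩
      · exact Or.inr ⟨hG.1, hv _ (Or.inl h)⟩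
      · exact Or.inl ⟨hG.1, hv _ (Or.inr h)⟩
      · exact Or.inr ⟨hG.1, hv _ (Or.inr h)⟩
    calc (C.filter fun G => i ∈ (g G).verts).card
        ≤ ((C.filter fun G => Sum.inl i ∈ G.verts) ∪
           (C.filter fun G => Sum.inr i ∈ G.verts)).card := Finset.card_le_card sub
      _ ≤ (C.filter fun G => Sum.inl i ∈ G.verts).card +
          (C.filter fun G => Sum.inr i ∈ G.verts).card := Finset.card_union_le _ _
      _ ≤ k + k := Nat.add_le_add (hloc _) (hloc _)
      _ = 2 * k := (two_mul k).symm

open scoped Classical in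
lemma small_mem {n : ℕ} (hn : n ≤ 1) :
    1 ∈ coverSet (⊤ : SimpleGraph (Fin n)) (fun G => IsCompleteBipartite G.coe) := by
  classical
  refine ⟨{biclique ⊤ Set.univ ∅}, ?_, ?_, ?_⟩
  · intro G hG
    rw [Finset.mem_singleton] at hG
    subst hG
    exact biclique_isCB (fun s _ t ht => absurd ht (Set.notMem_empty t))
  · apply sup_eq_top_of
    · intro v
      exact ⟨_, Finset.mem_singleton_self _, by rw [biclique_verts]; exact Or.inl trivial⟩
    · intro u v huv
      exfalso
      have hne : u ≠ v := by simpa using huv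
      have hu := u.2
      have hv := v.2
      exact hne (Fin.ext (by omega))
  · intro v
    exact le_trans (Finset.card_filter_le _ _) (by simp)

open scoped Classical in
lemma top_upper {n : ℕ} (hn : 2 ≤ n) :
    Nat.clog 2 n ∈ coverSet (⊤ : SimpleGraph (Fin n)) (fun G => IsCompleteBipartite G.coe) := by
  classical
  set c := Nat.clog 2 n with hc
  have hc1 : 1 ≤ c := Nat.clog_pos (by norm_num) hn
  set bic : ℕ → (⊤ : SimpleGraph (Fin n)).Subgraph := fun t =>
    biclique ⊤ {v : Fin n | Nat.testBit (v : ℕ) t = false}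
      {v : Fin n | Nat.testBit (v : ℕ) t = true} with hbic
  have hbits : ∀ t, ∀ s ∈ {v : Fin n | Nat.testBit (v : ℕ) t = false},
      ∀ u ∈ {v : Fin n | Nat.testBit (v : ℕ) t = true}, (⊤ : SimpleGraph (Fin n)).Adj s u := by
    intro t s hs u hu
    have : s ≠ u := by
      rintro rfl
      rw [Set.mem_setOf_eq] at hs hu
      rw [hs] at hu
      exact Bool.noConfusion hu
    simpa using this
  refine ⟨(Finset.range c).image bic, ?_, ?_, ?_⟩
  · intro G hG
    obtain ⟨t, _, rfl⟩ := Finset.mem_image.1 hG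
    exact biclique_isCB (hbits t)
  · apply sup_eq_top_of
    · intro v
      refine ⟨bic 0, Finset.mem_image_of_mem _ (Finset.mem_range.2 hc1), ?_⟩
      rw [hbic, biclique_verts]
      by_cases hb : Nat.testBit (v : ℕ) 0 = false
      · exact Or.inl hb
      · exact Or.inr (by simpa using hb)
    · intro u v huv
      have hne : (u : ℕ) ≠ (v : ℕ) := by
        have : u ≠ v := by simpa using huv
        exact fun h => this (Fin.ext h)
      have hex : ∃ t, Nat.testBit (u : ℕ) t ≠ Nat.testBit (v : ℕ) t := by
        by_contra hcon
        push_neg at hcon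
        exact hne (Nat.eq_of_testBit_eq hcon)
      obtain ⟨t, ht⟩ := hex
      have htc : t < c := by
        by_contra hcon
        push_neg at hcon
        have hu : Nat.testBit (u : ℕ) t = false :=
          Nat.testBit_lt_two_pow (lt_of_lt_of_le u.2
            (le_trans (Nat.le_pow_clog (by norm_num) n) (Nat.pow_le_pow_right (by norm_num) hcon)))
        have hv : Nat.testBit (v : ℕ) t = false :=
          Nat.testBit_lt_two_pow (lt_of_lt_of_le v.2
            (le_trans (Nat.le_pow_clog (by norm_num) n) (Nat.pow_le_pow_right (by norm_num) hcon)))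
        rw [hu, hv] at ht
        exact ht rfl
      refine ⟨bic t, Finset.mem_image_of_mem _ (Finset.mem_range.2 htc), ?_⟩
      rw [hbic]
      rcases Bool.eq_false_or_eq_true (Nat.testBit (u : ℕ) t) with hb | hb
      · have hb' : Nat.testBit (v : ℕ) t = false := by
          rcases Bool.eq_false_or_eq_true (Nat.testBit (v : ℕ) t) with h | h
          · exact absurd (hb.trans h.symm) ht
          · exact h
        exact biclique_adj.2 ⟨Or.inr ⟨hb, hb'⟩, huv⟩
      · have hb' : Nat.testBit (v : ℕ) t = true := by
          rcases Bool.eq_false_or_eq_true (Nat.testBit (v : ℕ) t) with h | h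
          · exact h
          · exact absurd (hb.trans h.symm) ht
        exact biclique_adj.2 ⟨Or.inl ⟨hb, hb'⟩, huv⟩
  · intro v
    calc (((Finset.range c).image bic).filter fun G => v ∈ G.verts).card
        ≤ ((Finset.range c).image bic).card := Finset.card_filter_le _ _
      _ ≤ (Finset.range c).card := Finset.card_image_le
      _ = c := Finset.card_range c


lemma topcover_nonempty (n : ℕ) :
    (coverSet (⊤ : SimpleGraph (Fin n)) (fun G => IsCompleteBipartite G.coe)).Nonempty := by
  rcases le_or_gt n 1 with h | h
  · exact ⟨1, small_mem h⟩
  · exact ⟨_, top_upper h⟩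

lemma part1 (n : ℕ) : cbCN (Kstar n) ≤ cbCN (⊤ : SimpleGraph (Fin n)) ∧
    cbCN (⊤ : SimpleGraph (Fin n)) ≤ 2 * cbCN (Kstar n) := by
  have hKmem : cbCN (⊤ : SimpleGraph (Fin n)) ∈
      coverSet (⊤ : SimpleGraph (Fin n)) (fun G => IsCompleteBipartite G.coe) := by
    rw [cbCN_eq]; exact Nat.sInf_mem (topcover_nonempty n)
  constructor
  · rw [cbCN_eq (Kstar n)]
    exact Nat.sInf_le (red1 hKmem)
  · have hne : (coverSet (Kstar n) (fun G => IsCompleteBipartite G.coe)).Nonempty :=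
      ⟨_, red1 hKmem⟩
    have hSmem := Nat.sInf_mem hne
    rw [cbCN_eq (⊤ : SimpleGraph (Fin n))]
    exact Nat.sInf_le (red2 hSmem)

lemma KS' (n : ℕ) : n ≤ 2 ^ (cbCN (⊤ : SimpleGraph (Fin n))) := by
  have hmem : cbCN (⊤ : SimpleGraph (Fin n)) ∈
      coverSet (⊤ : SimpleGraph (Fin n)) (fun G => IsCompleteBipartite G.coe) := by
    rw [cbCN_eq]; exact Nat.sInf_mem (topcover_nonempty n)
  obtain ⟨C, hP, hsup, hloc⟩ := hmem
  exact KS C hP hsup hloc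

lemma up_bound {n : ℕ} (hn : 2 ≤ n) : cbCN (⊤ : SimpleGraph (Fin n)) ≤ Nat.clog 2 n := by
  rw [cbCN_eq]; exact Nat.sInf_le (top_upper hn)

/-- **Proposition.**  `cn_ℓ(𝔅ℭ, K*_{n,n}) ≤ cn_ℓ(𝔅ℭ, K_n) ≤ 2·cn_ℓ(𝔅ℭ, K*_{n,n})`;
consequently `cn_ℓ(𝔅ℭ, K*_{n,n}) = Θ(log n)`. -/
theorem cbCN_Kstar :
    (∀ n : ℕ, cbCN (Kstar n) ≤ cbCN (⊤ : SimpleGraph (Fin n)) ∧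
      cbCN (⊤ : SimpleGraph (Fin n)) ≤ 2 * cbCN (Kstar n)) ∧
    (∃ c₁ c₂ : ℝ, 0 < c₁ ∧ 0 < c₂ ∧ ∃ N : ℕ, ∀ n : ℕ, N ≤ n →
      c₁ * Real.log n ≤ (cbCN (Kstar n) : ℝ) ∧
      (cbCN (Kstar n) : ℝ) ≤ c₂ * Real.log n) := by
  constructor
  · exact part1
  · refine ⟨(Real.log 4)⁻¹, 2 / Real.log 2, ?_, ?_, 2, ?_⟩
    · exact inv_pos.2 (Real.log_pos (by norm_num))
    · exact div_pos (by norm_num) (Real.log_pos (by norm_num))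
    · intro n hn
      have hn1 : 1 < n := hn
      have hnR : (0:ℝ) < n := by exact_mod_cast Nat.lt_of_lt_of_le Nat.zero_lt_two hn
      have hlog4 : (0:ℝ) < Real.log 4 := Real.log_pos (by norm_num)
      have hlog2 : (0:ℝ) < Real.log 2 := Real.log_pos (by norm_num)
      set k := cbCN (Kstar n) with hk
      constructor
      · -- lower bound
        have h4 : n ≤ 4 ^ k := by
          calc n ≤ 2 ^ (cbCN (⊤ : SimpleGraph (Fin n))) := KS' n
            _ ≤ 2 ^ (2 * k) := Nat.pow_le_pow_right (by norm_num) (part1 n).2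
            _ = 4 ^ k := by rw [pow_mul]; norm_num
        have h4R : (n:ℝ) ≤ (4:ℝ) ^ k := by exact_mod_cast h4
        have hlogle : Real.log n ≤ (k : ℝ) * Real.log 4 := by
          calc Real.log n ≤ Real.log ((4:ℝ) ^ k) := Real.log_le_log hnR h4R
            _ = (k : ℝ) * Real.log 4 := by rw [Real.log_pow]
        calc (Real.log 4)⁻¹ * Real.log n = Real.log n / Real.log 4 := by ring
          _ ≤ (k : ℝ) := (div_le_iff₀ hlog4).2 hlogle
      · -- upper bound
        set c := Nat.clog 2 n with hc
        have hc1 : 1 ≤ c := Nat.clog_pos (by norm_num) hn1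
        have hkc : k ≤ c := le_trans (part1 n).1 (up_bound hn)
        have hpow : 2 ^ (c - 1) < n := Nat.pow_pred_clog_lt_self (by norm_num) hn1
        have hpowR : (2:ℝ) ^ (c - 1 : ℕ) < (n:ℝ) := by exact_mod_cast hpow
        have hlogge : ((c - 1 : ℕ) : ℝ) * Real.log 2 ≤ Real.log n := by
          calc ((c - 1 : ℕ) : ℝ) * Real.log 2 = Real.log ((2:ℝ) ^ (c - 1 : ℕ)) := by
                rw [Real.log_pow]
            _ ≤ Real.log n := Real.log_le_log (by positivity) hpowR.le
        have hcast : ((c - 1 : ℕ) : ℝ) = (c : ℝ) - 1 := by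
          rw [Nat.cast_sub hc1]; norm_num
        have hcle : (c : ℝ) ≤ Real.log n / Real.log 2 + 1 := by
          rw [hcast] at hlogge
          have := (le_div_iff₀ hlog2).2 hlogge
          linarith
        have h1le : 1 ≤ Real.log n / Real.log 2 := by
          rw [le_div_iff₀ hlog2]
          have : (2:ℝ) ≤ (n:ℝ) := by exact_mod_cast hn
          calc 1 * Real.log 2 = Real.log 2 := one_mul _
            _ ≤ Real.log n := Real.log_le_log (by norm_num) this
        calc (k : ℝ) ≤ (c : ℝ) := by exact_mod_cast hkc
          _ ≤ Real.log n / Real.log 2 + 1 := hcle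
          _ ≤ Real.log n / Real.log 2 + Real.log n / Real.log 2 := by linarith
          _ = 2 / Real.log 2 * Real.log n := by ring
end

section
/- Let k be the local dimension of the Boolean lattice 2^[n] (the poset of all subsets of {1, …, n} ordered by inclusion). Then 2^n − n ≤ Σ_{j=1}^{k} binomial(2nk, j), and in particular 2^n − n ≤ k · binomial(2nk, k). -/
/-- A partial linear extension of a poset `P`: a linear extension of the
induced order on a subset `dom` of `P`. -/
structure PartialLinExt (P : Type*) [PartialOrder P] where
  dom : Set P
  rel : P → P → Prop
  refl : ∀ x ∈ dom, rel x x
  antisymm : ∀ x ∈ dom, ∀ y ∈ dom, rel x y → rel y x → x = y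
  trans' : ∀ x ∈ dom, ∀ y ∈ dom, ∀ z ∈ dom, rel x y → rel y z → rel x z
  total : ∀ x ∈ dom, ∀ y ∈ dom, rel x y ∨ rel y x
  le_imp_rel : ∀ x ∈ dom, ∀ y ∈ dom, x ≤ y → rel x y

/-- A local realizer of a poset `P`: a nonempty set `L` of partial linear
extensions such that every strict comparability `x < y` appears in some
member of `L`, and every incomparable pair appears in both orders among
the members of `L`. -/
def IsLocalRealizer {P : Type*} [PartialOrder P] (L : Set (PartialLinExt P)) : Prop :=
  L.Nonempty ∧
  (∀ x y : P, x < y → ∃ l ∈ L, x ∈ l.dom ∧ y ∈ l.dom ∧ l.rel x y) ∧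
  (∀ x y : P, ¬x ≤ y → ¬y ≤ x → ∃ l ∈ L, x ∈ l.dom ∧ y ∈ l.dom ∧ l.rel x y)

/-- The local dimension of a poset `P`: the least `k` for which there is a
local realizer of `P` in which every element of `P` appears in at most `k`
of the partial linear extensions. -/
noncomputable def ldim (P : Type*) [PartialOrder P] : ℕ :=
  sInf {k | ∃ L : Set (PartialLinExt P), IsLocalRealizer L ∧
    ∀ x : P, {l ∈ L | x ∈ l.dom}.Finite ∧ {l ∈ L | x ∈ l.dom}.ncard ≤ k}

namespace BLD

lemma exists_rel_min {α : Type*} [DecidableEq α] (r : α → α → Prop) :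
    ∀ (s : Finset α), s.Nonempty →
    (∀ x ∈ s, ∀ y ∈ s, r x y ∨ r y x) →
    (∀ x ∈ s, ∀ y ∈ s, ∀ z ∈ s, r x y → r y z → r x z) →
    ∃ m ∈ s, ∀ x ∈ s, r m x := by
  intro s
  induction s using Finset.induction_on with
  | empty => intro h; simp at h
  | insert _ _ ha ih =>
    rename_i a t
    intro _ htot htr
    rcases t.eq_empty_or_nonempty with rfl | htne
    · refine ⟨a, Finset.mem_insert_self a ∅, ?_⟩
      intro x hx
      have : x = a := by simpa using hx
      subst this
      exact (htot x (Finset.mem_insert_self x ∅) x (Finset.mem_insert_self x ∅)).elim id id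
    · obtain ⟨m, hm, hmin⟩ := ih htne
        (fun x hx y hy => htot x (Finset.mem_insert_of_mem hx) y (Finset.mem_insert_of_mem hy))
        (fun x hx y hy z hz => htr x (Finset.mem_insert_of_mem hx) y (Finset.mem_insert_of_mem hy)
          z (Finset.mem_insert_of_mem hz))
      have hma := htot a (Finset.mem_insert_self a t) m (Finset.mem_insert_of_mem hm)
      rcases hma with ham | hma
      · refine ⟨a, Finset.mem_insert_self a t, ?_⟩
        intro x hx
        rcases Finset.mem_insert.1 hx with rfl | hx
        · exact (htot x hx x hx).elim id id
        · exact htr a (Finset.mem_insert_self a t) m (Finset.mem_insert_of_mem hm)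
            x (Finset.mem_insert_of_mem hx) ham (hmin x hx)
      · refine ⟨m, Finset.mem_insert_of_mem hm, ?_⟩
        intro x hx
        rcases Finset.mem_insert.1 hx with rfl | hx
        · exact hma
        · exact hmin x hx

def ple2 {P : Type*} [PartialOrder P] (x y : P) (h : y ≤ x → x = y) : PartialLinExt P where
  dom := {x, y}
  rel a b := a = b ∨ (a = x ∧ b = y)
  refl _ _ := Or.inl rfl
  antisymm := by
    rintro a - b - (rfl | ⟨rfl, rfl⟩) (h2 | ⟨h3, h4⟩)
    · rfl
    · rfl
    · exact h2.symm
    · rw [h4, h3]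
  trans' := by
    rintro a - b - c - (rfl | ⟨rfl, rfl⟩) (rfl | ⟨h3, h4⟩)
    · exact Or.inl rfl
    · exact Or.inr ⟨h3, h4⟩
    · exact Or.inr ⟨rfl, rfl⟩
    · exact Or.inr ⟨rfl, h4⟩
  total := by
    rintro a (rfl | ha) b (rfl | hb)
    · exact Or.inl (Or.inl rfl)
    · rw [Set.mem_singleton_iff] at hb; subst hb; exact Or.inl (Or.inr ⟨rfl, rfl⟩)
    · rw [Set.mem_singleton_iff] at ha; subst ha; exact Or.inr (Or.inr ⟨rfl, rfl⟩)
    · rw [Set.mem_singleton_iff] at ha hb; subst ha; subst hb; exact Or.inl (Or.inl rfl)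
  le_imp_rel := by
    rintro a (rfl | ha) b (rfl | hb) hab
    · exact Or.inl rfl
    · rw [Set.mem_singleton_iff] at hb; subst hb; exact Or.inr ⟨rfl, rfl⟩
    · rw [Set.mem_singleton_iff] at ha; subst ha
      exact Or.inl (h hab).symm
    · rw [Set.mem_singleton_iff] at ha hb; subst ha; subst hb; exact Or.inl rfl

open Classical in
noncomputable def ple2' {P : Type*} [PartialOrder P] (x y : P) : PartialLinExt P :=
  if h : y ≤ x → x = y then ple2 x y h else ple2 x x (fun _ => rfl)

lemma exists_bounded_realizer (P : Type*) [PartialOrder P] [Finite P] [Nonempty P] :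
    {k | ∃ L : Set (PartialLinExt P), IsLocalRealizer L ∧
      ∀ x : P, {l ∈ L | x ∈ l.dom}.Finite ∧ {l ∈ L | x ∈ l.dom}.ncard ≤ k}.Nonempty := by
  classical
  set L := Set.range (fun p : P × P => ple2' p.1 p.2) with hL
  have hLfin : L.Finite := Set.finite_range _
  have key : ∀ x y : P, (y ≤ x → x = y) →
      ∃ l ∈ L, x ∈ l.dom ∧ y ∈ l.dom ∧ l.rel x y := by
    intro x y h
    refine ⟨ple2' x y, ⟨(x, y), rfl⟩, ?_⟩
    rw [ple2']
    rw [dif_pos h]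
    exact ⟨Set.mem_insert x {y}, Set.mem_insert_of_mem x rfl, Or.inr ⟨rfl, rfl⟩⟩
  refine ⟨L.ncard, L, ⟨⟨ple2' (Classical.arbitrary P) (Classical.arbitrary P),
      ⟨(Classical.arbitrary P, Classical.arbitrary P), rfl⟩⟩, ?_, ?_⟩, ?_⟩
  · intro x y hxy
    exact key x y (fun h' => le_antisymm hxy.le h')
  · intro x y h1 h2
    exact key x y (fun h' => absurd h' h2)
  · intro x
    exact ⟨hLfin.subset (Set.sep_subset _ _), Set.ncard_le_ncard (Set.sep_subset _ _) hLfin⟩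

lemma ldim_spec (P : Type*) [PartialOrder P] [Finite P] [Nonempty P] :
    ∃ L : Set (PartialLinExt P), IsLocalRealizer L ∧
      ∀ x : P, {l ∈ L | x ∈ l.dom}.Finite ∧ {l ∈ L | x ∈ l.dom}.ncard ≤ ldim P :=
  Nat.sInf_mem (exists_bounded_realizer P)

end BLD

namespace BLD

variable {n : ℕ}

abbrev En (n : ℕ) := PartialLinExt (Finset (Fin n))

def elt (t : Fin n × Bool) : Finset (Fin n) := if t.2 then {t.1}ᶜ else {t.1}

def Dset (l : En n) (S : Finset (Fin n)) : Set (Fin n × Bool) :=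
  {t | elt t ∈ l.dom ∧ S ≠ elt t ∧ (if t.2 = true then l.rel (elt t) S else l.rel S (elt t))}

lemma dset_dom {l : En n} {S : Finset (Fin n)} {t : Fin n × Bool} (ht : t ∈ Dset l S) :
    elt t ∈ l.dom := ht.1

lemma dset_min_exists (l : En n) (S : Finset (Fin n)) (h : (Dset l S).Nonempty) :
    ∃ t ∈ Dset l S, ∀ t' ∈ Dset l S, l.rel (elt t) (elt t') := by
  classical
  have hfin : (Dset l S).Finite := Set.toFinite _
  obtain ⟨m, hm, hmin⟩ := exists_rel_min (fun a b => l.rel (elt a) (elt b)) hfin.toFinset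
    (by rwa [Set.Finite.toFinset_nonempty])
    (fun x hx y hy => l.total _ (dset_dom (hfin.mem_toFinset.1 hx)) _ (dset_dom (hfin.mem_toFinset.1 hy)))
    (fun x hx y hy z hz => l.trans' _ (dset_dom (hfin.mem_toFinset.1 hx)) _
      (dset_dom (hfin.mem_toFinset.1 hy)) _ (dset_dom (hfin.mem_toFinset.1 hz)))
  exact ⟨m, hfin.mem_toFinset.1 hm, fun t' ht' => hmin t' (hfin.mem_toFinset.2 ht')⟩

noncomputable def minD (l : En n) (S : Finset (Fin n)) (h : (Dset l S).Nonempty) : Fin n × Bool :=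
  (dset_min_exists l S h).choose

lemma minD_mem (l : En n) (S : Finset (Fin n)) (h : (Dset l S).Nonempty) :
    minD l S h ∈ Dset l S := (dset_min_exists l S h).choose_spec.1

lemma minD_min (l : En n) (S : Finset (Fin n)) (h : (Dset l S).Nonempty) :
    ∀ t ∈ Dset l S, l.rel (elt (minD l S h)) (elt t) := (dset_min_exists l S h).choose_spec.2

def Phi (L : Set (En n)) (S : Finset (Fin n)) : Set ((Fin n × Bool) × En n) :=
  {p | p.2 ∈ L ∧ S ∈ p.2.dom ∧ ∃ h : (Dset p.2 S).Nonempty, p.1 = minD p.2 S h}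

lemma exists_wit (L : Set (En n)) (hreal : IsLocalRealizer L) {S' : Finset (Fin n)} {i : Fin n}
    (hS' : ∀ j, S' ≠ {j}) (hi : i ∉ S') :
    ∃ l ∈ L, S' ∈ l.dom ∧ ({i} : Finset (Fin n)) ∈ l.dom ∧ l.rel S' {i} := by
  by_cases h0 : S' = ∅
  · subst h0
    exact hreal.2.1 _ _ (Finset.empty_ssubset.2 (Finset.singleton_nonempty i))
  · have h1 : ¬ S' ≤ ({i} : Finset (Fin n)) := by
      intro hle
      rcases Finset.subset_singleton_iff.1 hle with rfl | rfl
      · exact h0 rfl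
      · exact hS' i rfl
    have h2 : ¬ ({i} : Finset (Fin n)) ≤ S' := fun hle => hi (Finset.singleton_subset_iff.1 hle)
    exact hreal.2.2 _ _ h1 h2

lemma elt_false (i : Fin n) : elt (i, false) = ({i} : Finset (Fin n)) := rfl

lemma elt_true (i : Fin n) : elt (i, true) = ({i}ᶜ : Finset (Fin n)) := rfl

lemma key (L : Set (En n)) (hreal : IsLocalRealizer L) {S S' : Finset (Fin n)}
    (hS' : ∀ j, S' ≠ {j}) (hphi : Phi L S = Phi L S') {i : Fin n}
    (hiS : i ∈ S) (hiS' : i ∉ S') : False := by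
  obtain ⟨l, hlL, hS'dom, hidom, hrel⟩ := exists_wit L hreal hS' hiS'
  have hti : ((i, false) : Fin n × Bool) ∈ Dset l S' := by
    refine ⟨hidom, fun h => hS' i h, ?_⟩
    simpa [elt_false] using hrel
  have hne' : (Dset l S').Nonempty := ⟨_, hti⟩
  have hp' : ((minD l S' hne', l)) ∈ Phi L S' := ⟨hlL, hS'dom, hne', rfl⟩
  rw [← hphi] at hp'
  obtain ⟨-, hSdom, hneS, hEq⟩ := hp'
  have hEq' : minD l S' hne' = minD l S hneS := hEq
  set t := minD l S' hne' with ht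
  have htS : t ∈ Dset l S := by rw [hEq']; exact minD_mem _ _ _
  have htS' : t ∈ Dset l S' := minD_mem _ _ _
  have hrelti : l.rel (elt t) ({i} : Finset (Fin n)) := by
    have := minD_min l S' hne' _ hti
    simpa [elt_false] using this
  have hrel_iS : l.rel ({i} : Finset (Fin n)) S :=
    l.le_imp_rel _ hidom _ hSdom (Finset.singleton_subset_iff.2 hiS)
  obtain ⟨hdom1, hneq1, hcond1⟩ := htS
  by_cases hb : t.2 = true
  · rw [if_pos hb] at hcond1
    obtain ⟨hdom2, hneq2, hcond2⟩ := htS'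
    rw [if_pos hb] at hcond2
    have helt : elt t = ({t.1}ᶜ : Finset (Fin n)) := by simp [elt, hb]
    have h1 : t.1 ∈ S' := by
      by_contra hmem
      have hsub : S' ≤ elt t := by
        rw [helt]
        intro x hx
        simp only [Finset.mem_compl, Finset.mem_singleton]
        rintro rfl
        exact hmem hx
      exact hneq2 (l.antisymm _ hS'dom _ hdom2 (l.le_imp_rel _ hS'dom _ hdom2 hsub) hcond2)
    have hij : i ≠ t.1 := fun h => hiS' (h ▸ h1)
    have h2 : ({i} : Finset (Fin n)) ≤ elt t := by
      rw [helt]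
      simp only [Finset.le_eq_subset, Finset.singleton_subset_iff, Finset.mem_compl,
        Finset.mem_singleton]
      exact hij
    have h3 : l.rel {i} (elt t) := l.le_imp_rel _ hidom _ hdom1 h2
    have h4 : elt t = ({i} : Finset (Fin n)) := l.antisymm _ hdom1 _ hidom hrelti h3
    have h5 : S' = ({i} : Finset (Fin n)) :=
      l.antisymm _ hS'dom _ hidom hrel (h4 ▸ hcond2)
    exact hiS' (h5 ▸ Finset.mem_singleton_self i)
  · rw [if_neg hb] at hcond1
    have h1 : l.rel ({i} : Finset (Fin n)) (elt t) :=
      l.trans' _ hidom _ hSdom _ hdom1 hrel_iS hcond1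
    have h2 : elt t = ({i} : Finset (Fin n)) := l.antisymm _ hdom1 _ hidom hrelti h1
    have h3 : S = ({i} : Finset (Fin n)) :=
      l.antisymm _ hSdom _ hidom (h2 ▸ hcond1) hrel_iS
    exact hneq1 (h3.trans h2.symm)

lemma phi_nonempty (L : Set (En n)) (hreal : IsLocalRealizer L) (hn : 0 < n)
    {S : Finset (Fin n)} (hS : ∀ j, S ≠ ({j} : Finset (Fin n))) :
    (Phi L S).Nonempty := by
  suffices h : ∃ l ∈ L, S ∈ l.dom ∧ (Dset l S).Nonempty by
    obtain ⟨l, hl, hd, hne⟩ := h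
    exact ⟨(minD l S hne, l), hl, hd, hne, rfl⟩
  by_cases hu : S = Finset.univ
  · subst hu
    set i : Fin n := ⟨0, hn⟩
    have hne : ({i}ᶜ : Finset (Fin n)) ≠ Finset.univ := by
      intro h
      have : i ∈ ({i}ᶜ : Finset (Fin n)) := h ▸ Finset.mem_univ i
      simp at this
    obtain ⟨l, hl, hd1, hd2, hr⟩ := hreal.2.1 _ _ (Finset.ssubset_univ_iff.2 hne)
    refine ⟨l, hl, hd2, ⟨(i, true), ?_⟩⟩
    exact ⟨hd1, fun h => hne h.symm, by simpa [elt_true] using hr⟩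
  · obtain ⟨i, hi⟩ : ∃ i, i ∉ S := by
      by_contra h
      push_neg at h
      exact hu (Finset.eq_univ_iff_forall.2 h)
    obtain ⟨l, hl, hd1, hd2, hr⟩ := exists_wit L hreal hS hi
    refine ⟨l, hl, hd1, ⟨(i, false), ?_⟩⟩
    exact ⟨hd2, hS i, by simpa [elt_false] using hr⟩

lemma phi_finite_card (L : Set (En n)) {S : Finset (Fin n)} {k : ℕ}
    (hbS : {l ∈ L | S ∈ l.dom}.Finite) (hk : {l ∈ L | S ∈ l.dom}.ncard ≤ k) :
    (Phi L S).Finite ∧ (Phi L S).ncard ≤ k := by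
  have hmaps : ∀ p ∈ Phi L S, p.2 ∈ {l ∈ L | S ∈ l.dom} := fun p hp => ⟨hp.1, hp.2.1⟩
  have hinj : Set.InjOn (fun p => p.2) (Phi L S) := by
    rintro ⟨t1, l1⟩ h1 ⟨t2, l2⟩ h2 h
    simp only at h
    subst h
    obtain ⟨-, -, hne1, he1⟩ := h1
    obtain ⟨-, -, hne2, he2⟩ := h2
    simp only at he1 he2
    rw [Prod.mk.injEq]
    exact ⟨he1.trans he2.symm, rfl⟩
  have hfin : (Phi L S).Finite := by
    refine Set.Finite.of_finite_image (hbS.subset ?_) hinj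
    rintro _ ⟨p, hp, rfl⟩
    exact hmaps p hp
  exact ⟨hfin, (Set.ncard_le_ncard_of_injOn (fun p => p.2) hmaps hinj hbS).trans hk⟩

end BLD

namespace BLD

lemma choose_mono_half {m a b : ℕ} (hab : a ≤ b) (hb : 2 * b ≤ m) :
    m.choose a ≤ m.choose b := by
  induction b with
  | zero => simp_all
  | succ b ih =>
    rcases Nat.lt_or_ge a (b + 1) with h | h
    · have hb' : 2 * b ≤ m := by omega
      have h1 : m.choose a ≤ m.choose b := ih (by omega) (by omega)
      have h2 : b < m / 2 := by omega
      exact h1.trans (Nat.choose_le_succ_of_lt_half_left h2)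
    · have : a = b + 1 := by omega
      subst this; rfl

end BLD

/-- **Theorem.** If `k = ldim(2^[n])` is the local dimension of the Boolean
lattice of subsets of `{1,…,n}`, then `2^n − n ≤ ∑_{j=1}^{k} C(2nk, j)`, and
in particular `2^n − n ≤ k · C(2nk, k)`. -/
theorem pow_sub_le_of_ldim_booleanLattice (n k : ℕ) (hn : 1 ≤ n)
    (hk : k = ldim (Finset (Fin n))) :
    2 ^ n - n ≤ ∑ j ∈ Finset.Icc 1 k, Nat.choose (2 * n * k) j ∧
    2 ^ n - n ≤ k * Nat.choose (2 * n * k) k := by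
  classical
  open BLD in
  have hn0 : 0 < n := hn
  obtain ⟨L, hreal, hbnd⟩ : ∃ L : Set (En n), IsLocalRealizer L ∧
      ∀ x : Finset (Fin n), {l ∈ L | x ∈ l.dom}.Finite ∧ {l ∈ L | x ∈ l.dom}.ncard ≤ k := by
    obtain ⟨L, h1, h2⟩ := BLD.ldim_spec (Finset (Fin n))
    exact ⟨L, h1, fun x => ⟨(h2 x).1, hk ▸ (h2 x).2⟩⟩
  have hPhiFin : ∀ S : Finset (Fin n), (Phi L S).Finite ∧ (Phi L S).ncard ≤ k :=
    fun S => BLD.phi_finite_card L (hbnd S).1 (hbnd S).2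
  -- the ambient finite set
  set GF : Finset ((Fin n × Bool) × En n) :=
    Finset.univ.biUnion
      (fun t : Fin n × Bool => ((hbnd (elt t)).1.toFinset.image (fun l => (t, l)))) with hGF
  have hGFcard : GF.card ≤ 2 * n * k := by
    calc GF.card ≤ ∑ t : Fin n × Bool,
        ((hbnd (elt t)).1.toFinset.image (fun l => (t, l))).card := Finset.card_biUnion_le
      _ ≤ ∑ _t : Fin n × Bool, k := by
          refine Finset.sum_le_sum fun t _ => ?_
          refine (Finset.card_image_le).trans ?_
          rw [← Set.ncard_eq_toFinset_card _ (hbnd (elt t)).1]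
          exact (hbnd (elt t)).2
      _ = 2 * n * k := by
          rw [Finset.sum_const, Finset.card_univ, Fintype.card_prod, Fintype.card_fin,
            Fintype.card_bool, smul_eq_mul]
          ring
  have hPhiG : ∀ S : Finset (Fin n), ∀ p ∈ Phi L S, p ∈ GF := by
    rintro S ⟨t, l⟩ ⟨hl, hdom, hne, heq⟩
    simp only at heq
    have hm := minD_mem l S hne
    rw [← heq] at hm
    refine Finset.mem_biUnion.2 ⟨t, Finset.mem_univ t, Finset.mem_image.2
      ⟨l, (Set.Finite.mem_toFinset _).2 ⟨hl, hm.1⟩, rfl⟩⟩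
  set A : Finset (Finset (Fin n)) :=
    Finset.univ \ Finset.univ.image (fun i : Fin n => ({i} : Finset (Fin n))) with hA
  have hAmem : ∀ S ∈ A, ∀ j, S ≠ ({j} : Finset (Fin n)) := by
    intro S hS j h
    rw [hA, Finset.mem_sdiff] at hS
    exact hS.2 (Finset.mem_image.2 ⟨j, Finset.mem_univ j, h.symm⟩)
  have hAcard : A.card = 2 ^ n - n := by
    rw [hA, Finset.card_sdiff_of_subset (Finset.subset_univ _), Finset.card_univ, Fintype.card_finset,
      Finset.card_image_of_injective _ Finset.singleton_injective, Finset.card_univ,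
      Fintype.card_fin]
  set B : Finset (Finset ((Fin n × Bool) × En n)) :=
    (Finset.Icc 1 k).biUnion (fun j => GF.powersetCard j) with hB
  set F : Finset (Fin n) → Finset ((Fin n × Bool) × En n) :=
    fun S => (hPhiFin S).1.toFinset with hF
  have hFB : ∀ S ∈ A, F S ∈ B := by
    intro S hS
    have hne : (Phi L S).Nonempty := phi_nonempty L hreal hn0 (hAmem S hS)
    have hsub : F S ⊆ GF := fun p hp => hPhiG S p ((Set.Finite.mem_toFinset _).1 hp)
    have hcard : (F S).card = (Phi L S).ncard := (Set.ncard_eq_toFinset_card _ _).symm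
    refine Finset.mem_biUnion.2 ⟨(F S).card, Finset.mem_Icc.2 ⟨?_, ?_⟩,
      Finset.mem_powersetCard.2 ⟨hsub, rfl⟩⟩
    · exact Finset.card_pos.2 ((Set.Finite.toFinset_nonempty _).2 hne)
    · rw [hcard]; exact (hPhiFin S).2
  have hFinj : Set.InjOn F ↑A := by
    intro S hS S' hS' hFF
    have hPhiEq : Phi L S = Phi L S' := Set.Finite.toFinset_inj.1 hFF
    by_contra hne
    have hex : ∃ i, (i ∈ S ∧ i ∉ S') ∨ (i ∈ S' ∧ i ∉ S) := by
      by_contra h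
      push_neg at h
      apply hne
      ext i
      have := h i
      tauto
    obtain ⟨i, hcase⟩ := hex
    rcases hcase with ⟨h1, h2⟩ | ⟨h1, h2⟩
    · exact key L hreal (hAmem S' (Finset.mem_coe.1 hS')) hPhiEq h1 h2
    · exact key L hreal (hAmem S (Finset.mem_coe.1 hS)) hPhiEq.symm h1 h2
  have h1 : A.card ≤ B.card := Finset.card_le_card_of_injOn F hFB hFinj
  have h2 : B.card ≤ ∑ j ∈ Finset.Icc 1 k, Nat.choose (2 * n * k) j := by
    calc B.card ≤ ∑ j ∈ Finset.Icc 1 k, (GF.powersetCard j).card := Finset.card_biUnion_le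
      _ = ∑ j ∈ Finset.Icc 1 k, GF.card.choose j := by
          exact Finset.sum_congr rfl fun j _ => Finset.card_powersetCard j GF
      _ ≤ ∑ j ∈ Finset.Icc 1 k, Nat.choose (2 * n * k) j :=
          Finset.sum_le_sum fun j _ => Nat.choose_le_choose j hGFcard
  have part1 : 2 ^ n - n ≤ ∑ j ∈ Finset.Icc 1 k, Nat.choose (2 * n * k) j := by
    rw [← hAcard]; exact h1.trans h2
  refine ⟨part1, part1.trans ?_⟩
  have hterm : ∀ j ∈ Finset.Icc 1 k, Nat.choose (2 * n * k) j ≤ Nat.choose (2 * n * k) k := by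
    intro j hj
    refine BLD.choose_mono_half (Finset.mem_Icc.1 hj).2 ?_
    have : 2 * 1 * k ≤ 2 * n * k := by
      apply Nat.mul_le_mul_right
      omega
    omega
  calc ∑ j ∈ Finset.Icc 1 k, Nat.choose (2 * n * k) j
      ≤ ∑ _j ∈ Finset.Icc 1 k, Nat.choose (2 * n * k) k := Finset.sum_le_sum hterm
    _ = k * Nat.choose (2 * n * k) k := by
        rw [Finset.sum_const, Nat.card_Icc]
        simp [Nat.smul_one_eq_cast]
end

section
/- As n → ∞, cn_ℓ(𝔇, G_{P(1,2;n)}) ≥ log₂ log₂ n − (1 + 1/ln 2) · log₂ log₂ log₂ n − o(1); i.e., liminf_{n→∞} ( cn_ℓ(𝔇, G_{P(1,2;n)}) − log₂ log₂ n + (1 + 1/ln 2) · log₂ log₂ log₂ n ) ≥ 0. Consequently ldim(P(1,2;n)) ≥ log₂ log₂ n − (1 + 1/ln 2) · log₂ log₂ log₂ n − o(1). -/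
open SimpleGraph

/-- The poset `P(1,2;n)`: singletons and 2-element subsets of `{1,…,n}`,
ordered by inclusion. -/
abbrev P12 (n : ℕ) := {A : Finset (Fin n) // A.card = 1 ∨ A.card = 2}

/-- The bipartite graph `G_{P(1,2;n)}` of critical pairs: a singleton `{a}`
is adjacent to a pair `{b,c}` iff `a ∉ {b,c}` (iff they are incomparable). -/
def G12 (n : ℕ) : SimpleGraph (P12 n) where
  Adj x y := (x.1.card = 1 ∧ y.1.card = 2 ∧ ¬x.1 ⊆ y.1) ∨
             (y.1.card = 1 ∧ x.1.card = 2 ∧ ¬y.1 ⊆ x.1)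
  symm := ⟨by intro x y h; tauto⟩
  loopless := ⟨by intro x h; rcases h with ⟨h1, h2, _⟩ | ⟨h1, h2, _⟩ <;> omega⟩


----------------------------------------------------------------------
-- Auxiliary machinery
----------------------------------------------------------------------
section AuxES
open Finset
variable {N : ℕ} (v : Fin N → ℕ)


/-- length of longest weakly increasing (in `v`) strictly index-increasing chain ending at `i` -/
noncomputable def incLen (v : Fin N → ℕ) : Fin N → ℕ
  | i => 1 + ((Finset.univ.filter (fun j : Fin N => j < i ∧ v j ≤ v i)).attach.sup
      (fun j => incLen v j.1))
  termination_by i => i.1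
  decreasing_by
    have := (Finset.mem_filter.mp j.2).2.1
    exact this

lemma incLen_pos (i : Fin N) : 1 ≤ incLen v i := by
  rw [incLen]; omega

lemma incLen_lt {i i' : Fin N} (h : i < i') (hv : v i ≤ v i') :
    incLen v i < incLen v i' := by
  conv_rhs => rw [incLen]
  have hmem : i ∈ (Finset.univ.filter (fun j : Fin N => j < i' ∧ v j ≤ v i')) := by
    simp [h, hv]
  have : incLen v i ≤ ((Finset.univ.filter (fun j : Fin N => j < i' ∧ v j ≤ v i')).attach.sup
      (fun j => incLen v j.1)) :=
    Finset.le_sup (f := fun j => incLen v j.1) (Finset.mem_attach _ ⟨i, hmem⟩)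
  omega

lemma fin_one_eq {k : ℕ} (hk : k = 0) (a b : Fin (k+1)) : a = b := by
  subst hk; omega

lemma incLen_extract : ∀ (k : ℕ) (i : Fin N), k + 1 ≤ incLen v i →
    ∃ g : Fin (k + 1) → Fin N, StrictMono g ∧ g (Fin.last k) = i ∧
      ∀ x y : Fin (k+1), x ≤ y → v (g x) ≤ v (g y) := by
  intro k
  induction k with
  | zero =>
    intro i _
    refine ⟨fun _ => i, fun a b hab => absurd (fin_one_eq rfl a b) hab.ne, rfl,
      fun x y _ => by rw [fin_one_eq rfl x y]⟩
  | succ k ih =>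
    intro i hi
    rw [incLen] at hi
    set s := (Finset.univ.filter (fun j : Fin N => j < i ∧ v j ≤ v i)) with hs
    have hsup : k + 1 ≤ s.attach.sup (fun j => incLen v j.1) := by omega
    have hne : s.attach.Nonempty := by
      by_contra hemp
      rw [Finset.not_nonempty_iff_eq_empty] at hemp
      rw [hemp] at hsup
      simp at hsup
    obtain ⟨j, _, hj⟩ := Finset.exists_mem_eq_sup _ hne (fun j => incLen v j.1)
    have hj' : k + 1 ≤ incLen v j.1 := by omega
    obtain ⟨g', hg'mono, hg'last, hg'v⟩ := ih j.1 hj'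
    have hjlt : j.1 < i := (Finset.mem_filter.mp j.2).2.1
    have hjv : v j.1 ≤ v i := (Finset.mem_filter.mp j.2).2.2
    refine ⟨Fin.snoc g' i, ?_, by simp, ?_⟩
    · intro a b hab
      rcases Fin.eq_castSucc_or_eq_last b with ⟨b', rfl⟩ | rfl
      · rcases Fin.eq_castSucc_or_eq_last a with ⟨a', rfl⟩ | rfl
        · simp only [Fin.snoc_castSucc]
          exact hg'mono (by exact_mod_cast hab)
        · exact absurd (hab.trans (Fin.castSucc_lt_last b')) (lt_irrefl _)
      · rcases Fin.eq_castSucc_or_eq_last a with ⟨a', rfl⟩ | rfl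
        · simp only [Fin.snoc_castSucc, Fin.snoc_last]
          calc g' a' ≤ g' (Fin.last k) := hg'mono.monotone (Fin.le_last a')
          _ = j.1 := hg'last
          _ < i := hjlt
        · exact absurd rfl hab.ne
    · intro x y hxy
      rcases Fin.eq_castSucc_or_eq_last y with ⟨y', rfl⟩ | rfl
      · rcases Fin.eq_castSucc_or_eq_last x with ⟨x', rfl⟩ | rfl
        · simp only [Fin.snoc_castSucc]
          exact hg'v x' y' (by exact_mod_cast hxy)
        · exact absurd (lt_of_le_of_lt hxy (Fin.castSucc_lt_last y')) (lt_irrefl _)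
      · rcases Fin.eq_castSucc_or_eq_last x with ⟨x', rfl⟩ | rfl
        · simp only [Fin.snoc_castSucc, Fin.snoc_last]
          calc v (g' x') ≤ v (g' (Fin.last k)) := hg'v _ _ (Fin.le_last x')
          _ = v j.1 := by rw [hg'last]
          _ ≤ v i := hjv
        · simp

/-- Erdős–Szekeres, weak form. -/
lemma my_erdos_szekeres {L : ℕ} (hN : L * L < N) :
    ∃ g : Fin (L + 1) → Fin N, StrictMono g ∧
      ((∀ x y, x ≤ y → v (g x) ≤ v (g y)) ∨ (∀ x y, x ≤ y → v (g y) ≤ v (g x))) := by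
  by_cases hbig : ∃ i, L + 1 ≤ incLen v i
  · obtain ⟨i, hi⟩ := hbig
    obtain ⟨g, h1, _, h3⟩ := incLen_extract v L i hi
    exact ⟨g, h1, Or.inl h3⟩
  · push_neg at hbig
    rcases Nat.eq_zero_or_pos L with rfl | hL
    · have hN1 : 0 < N := by omega
      refine ⟨fun _ => ⟨0, hN1⟩, fun a b hab => absurd (by omega : a = b) hab.ne,
        Or.inl ?_⟩
      intro x y _
      have : x = y := by omega
      rw [this]
    have hmaps : ∀ i ∈ (Finset.univ : Finset (Fin N)), incLen v i ∈ Finset.Icc 1 L := by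
      intro i _
      simp only [Finset.mem_Icc]
      exact ⟨incLen_pos v i, by have := hbig i; omega⟩
    have hcard : (Finset.Icc 1 L).card * L < (Finset.univ : Finset (Fin N)).card := by
      simpa [Nat.card_Icc] using hN
    obtain ⟨y, _, hy⟩ := Finset.exists_lt_card_fiber_of_mul_lt_card_of_maps_to hmaps hcard
    set t := Finset.univ.filter (fun i : Fin N => incLen v i = y) with ht
    have hy' : L + 1 ≤ t.card := hy
    obtain ⟨u, hut, hucard⟩ := Finset.exists_subset_card_eq hy'
    set e := u.orderIsoOfFin hucard with he
    refine ⟨fun x => (e x : Fin N), ?_, Or.inr ?_⟩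
    · intro a b hab
      exact_mod_cast e.strictMono hab
    · intro x y hxy
      rcases eq_or_lt_of_le hxy with rfl | hlt
      · exact le_refl _
      · have hgl : ((e x : Fin N)) < ((e y : Fin N)) := by exact_mod_cast e.strictMono hlt
        have hxt : (e x : Fin N) ∈ t := hut (e x).2
        have hyt : (e y : Fin N) ∈ t := hut (e y).2
        rw [ht, Finset.mem_filter] at hxt hyt
        by_contra hcon
        push_neg at hcon
        have := incLen_lt v hgl (le_of_lt hcon)
        omega

end AuxES


def Bfun (d : ℕ) : ℕ → ℕ
  | 0 => 2
  | (r+1) => d * ((Bfun d r)^2 + 1) + 2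

lemma Bfun_ge_two (d r : ℕ) : 2 ≤ Bfun d r := by
  cases r with
  | zero => simp [Bfun]
  | succ r => unfold Bfun; omega

lemma Bfun_le (d r : ℕ) : Bfun d r ≤ (4*(d+1))^(2^(r+1) - 1) := by
  induction r with
  | zero => simp [Bfun]; omega
  | succ r ih =>
    have hB2 := Bfun_ge_two d r
    have hB4 : 4 ≤ (Bfun d r)^2 := by nlinarith
    have h1 : Bfun d (r+1) ≤ (2*d+1) * (Bfun d r)^2 := by
      rw [show Bfun d (r+1) = d * ((Bfun d r)^2 + 1) + 2 from rfl]
      nlinarith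
    have h2 : (2*d+1) * (Bfun d r)^2 ≤ (4*(d+1)) * ((4*(d+1))^(2^(r+1) - 1))^2 := by
      apply Nat.mul_le_mul (by omega)
      exact Nat.pow_le_pow_left ih 2
    have h3 : (4*(d+1)) * ((4*(d+1))^(2^(r+1) - 1))^2 = (4*(d+1))^(2^(r+2) - 1) := by
      have h5 : 1 ≤ 2^(r+1) := Nat.one_le_two_pow
      have h6 : 2^(r+2) = 2 * 2^(r+1) := by ring
      have e1 : 2^(r+2) - 1 = (2^(r+1) - 1) * 2 + 1 := by omega
      have key : ∀ K E : ℕ, K * (K^E)^2 = K^(E*2+1) := by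
        intro K E
        rw [pow_succ]
        ring
      rw [e1]
      exact key _ _
    exact le_trans h1 (le_trans h2 (le_of_eq h3))
  
lemma Bfun_le' (d : ℕ) : Bfun d d ≤ (4*(d+1))^(2^(d+1)) := by
  calc Bfun d d ≤ (4*(d+1))^(2^(d+1) - 1) := Bfun_le d d
  _ ≤ (4*(d+1))^(2^(d+1)) := Nat.pow_le_pow_right (by omega) (Nat.sub_le _ _)


section LemAmain
open Finset
variable {α ι : Type*} (d : ℕ) (dom : ι → Set α) (le : ι → α → α → Prop)

theorem lemmaA_aux
    (hrefl : ∀ j, ∀ a ∈ dom j, le j a a)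
    (htrans : ∀ j, ∀ a ∈ dom j, ∀ b ∈ dom j, ∀ c ∈ dom j, le j a b → le j b c → le j a c)
    (htot : ∀ j, ∀ a ∈ dom j, ∀ b ∈ dom j, le j a b ∨ le j b a)
    (hloc : ∀ a : α, ∃ V : Finset ι, V.card ≤ d ∧ ∀ j, a ∈ dom j → j ∈ V)
    (hcov : ∀ b c : α, b ≠ c → ∃ T : Finset ι, T.card ≤ d ∧ ∀ a, a ≠ b → a ≠ c →
      ∃ j ∈ T, a ∈ dom j ∧ (b ∈ dom j → le j b a ∧ ¬ le j a b) ∧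
        (c ∈ dom j → le j c a ∧ ¬ le j a c)) :
    ∀ (r : ℕ) (F : Finset ι), d ≤ F.card + r → ∀ (m : ℕ) (s : Fin m → α),
      Function.Injective s →
      (∀ j ∈ F, ∀ i, s i ∈ dom j) →
      (∀ j ∈ F, (∀ i₁ i₂ : Fin m, i₁ < i₂ → le j (s i₁) (s i₂)) ∨
        (∀ i₁ i₂ : Fin m, i₁ < i₂ → le j (s i₂) (s i₁))) →
      m ≤ Bfun d r := by
  classical
  intro r
  induction r with
  | zero =>
    intro F hbud m s hinj hdom halign
    by_contra hm
    push_neg at hm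
    simp only [Bfun] at hm
    have hm3 : 3 ≤ m := by omega
    have hne : ∀ i i' : Fin m, i.val ≠ i'.val → s i ≠ s i' := by
      intro i i' h he
      exact h (congrArg Fin.val (hinj he))
    set i0 : Fin m := ⟨0, by omega⟩ with hi0
    set itop : Fin m := ⟨m-1, by omega⟩ with hitop
    set i1 : Fin m := ⟨1, by omega⟩ with hi1
    obtain ⟨T, hT, hwit⟩ := hcov (s itop) (s i0) (hne _ _ (by simp [hitop, hi0]; omega))
    obtain ⟨j, hjT, hjdom, hbb, hcc⟩ :=
      hwit (s i1) (hne _ _ (by simp [hitop, hi1]; omega)) (hne _ _ (by simp [hi0, hi1]))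
    have hjF : j ∉ F := by
      intro hjF
      rcases halign j hjF with hasc | hdesc
      · exact (hbb (hdom j hjF itop)).2 (hasc i1 itop (by simp [Fin.lt_def, hi1, hitop]; omega))
      · exact (hcc (hdom j hjF i0)).2 (hdesc i0 i1 (by simp [Fin.lt_def, hi1, hi0]))
    obtain ⟨Va, hVacard, hVamem⟩ := hloc (s i1)
    have hsub : insert j F ⊆ Va := by
      intro x hx
      rcases Finset.mem_insert.mp hx with rfl | hxF
      · exact hVamem x hjdom
      · exact hVamem x (hdom x hxF i1)
    have hcard2 : F.card + 1 ≤ Va.card := by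
      have := Finset.card_le_card hsub
      rwa [Finset.card_insert_of_notMem hjF] at this
    omega
  | succ r ih =>
    intro F hbud m s hinj hdom halign
    by_contra hm
    push_neg at hm
    have hBr2 := Bfun_ge_two d r
    simp only [Bfun] at hm
    have hm3 : 3 ≤ m := by omega
    have hne : ∀ i i' : Fin m, i.val ≠ i'.val → s i ≠ s i' := by
      intro i i' h he
      exact h (congrArg Fin.val (hinj he))
    set i0 : Fin m := ⟨0, by omega⟩ with hi0
    set itop : Fin m := ⟨m-1, by omega⟩ with hitop
    obtain ⟨T, hT, hwit⟩ := hcov (s itop) (s i0) (hne _ _ (by simp [hitop, hi0]; omega))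
    have hmid : ∀ i : Fin m, 0 < i.val → i.val < m-1 →
        ∃ j, j ∈ T ∧ s i ∈ dom j ∧
          (s itop ∈ dom j → le j (s itop) (s i) ∧ ¬ le j (s i) (s itop)) ∧
          (s i0 ∈ dom j → le j (s i0) (s i) ∧ ¬ le j (s i) (s i0)) := by
      intro i h1 h2
      obtain ⟨j, hj1, hj2⟩ := hwit (s i) (hne _ _ (by simp [hitop]; omega))
        (hne _ _ (by simp [hi0]; omega))
      exact ⟨j, hj1, hj2⟩
    have hν : Nonempty ι := by
      obtain ⟨j, _⟩ := hmid ⟨1, by omega⟩ (by simp) (by simp; omega)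
      exact ⟨j⟩
    have hmid' : ∀ i : Fin m, ∃ j, 0 < i.val → i.val < m-1 →
        (j ∈ T ∧ s i ∈ dom j ∧
          (s itop ∈ dom j → le j (s itop) (s i) ∧ ¬ le j (s i) (s itop)) ∧
          (s i0 ∈ dom j → le j (s i0) (s i) ∧ ¬ le j (s i) (s i0))) := by
      intro i
      by_cases h : 0 < i.val ∧ i.val < m-1
      · obtain ⟨j, hj⟩ := hmid i h.1 h.2
        exact ⟨j, fun _ _ => hj⟩
      · exact ⟨hν.some, fun h1 h2 => absurd ⟨h1, h2⟩ h⟩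
    choose g hg using hmid'
    set M := Finset.univ.filter (fun i : Fin m => 0 < i.val ∧ i.val < m-1) with hM
    have hMcard : M.card = m - 2 := by
      have hMeq : M = Finset.univ \ {i0, itop} := by
        ext i
        simp only [hM, Finset.mem_filter, Finset.mem_univ, true_and, Finset.mem_sdiff,
          Finset.mem_insert, Finset.mem_singleton, hi0, hitop, Fin.ext_iff]
        have := i.isLt
        omega
      rw [hMeq, Finset.card_sdiff_of_subset (by intro x _; simp)]
      rw [Finset.card_pair (by simp [hi0, hitop, Fin.ext_iff]; omega)]
      simp
    have hmaps : ∀ i ∈ M, g i ∈ T := by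
      intro i hi
      obtain ⟨h1, h2⟩ := (Finset.mem_filter.mp hi).2
      exact (hg i h1 h2).1
    have hTne : T.Nonempty := by
      refine ⟨g ⟨1, by omega⟩, hmaps _ ?_⟩
      simp only [hM, Finset.mem_filter, Finset.mem_univ, true_and]
      exact ⟨(by norm_num : (0:ℕ) < 1), (by omega : 1 < m - 1)⟩
    have hnle : T.card * ((Bfun d r)^2 + 1) ≤ M.card := by
      rw [hMcard]
      calc T.card * ((Bfun d r)^2 + 1) ≤ d * ((Bfun d r)^2 + 1) :=
        Nat.mul_le_mul_right _ hT
      _ ≤ m - 2 := by omega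
    obtain ⟨js, hjsT, hfib⟩ :=
      Finset.exists_le_card_fiber_of_mul_le_card_of_maps_to hmaps hTne hnle
    set Tf := M.filter (fun i => g i = js) with hTfdef
    have hTfQ : ∀ i ∈ Tf, s i ∈ dom js ∧
        (s itop ∈ dom js → le js (s itop) (s i) ∧ ¬ le js (s i) (s itop)) ∧
        (s i0 ∈ dom js → le js (s i0) (s i) ∧ ¬ le js (s i) (s i0)) := by
      intro i hi
      obtain ⟨hiM, hgi⟩ := Finset.mem_filter.mp hi
      obtain ⟨h1, h2⟩ := (Finset.mem_filter.mp hiM).2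
      have := hg i h1 h2
      rw [hgi] at this
      exact ⟨this.2.1, this.2.2⟩
    have hTfmid : ∀ i ∈ Tf, 0 < i.val ∧ i.val < m - 1 := by
      intro i hi
      exact (Finset.mem_filter.mp (Finset.mem_filter.mp hi).1).2
    have hTfcard : (Bfun d r)^2 + 1 ≤ Tf.card := hfib
    have hjsF : js ∉ F := by
      intro hjsF
      obtain ⟨i, hiTf⟩ := Finset.card_pos.mp (by omega : 0 < Tf.card)
      obtain ⟨hmid1, hmid2⟩ := hTfmid i hiTf
      rcases halign js hjsF with hasc | hdesc
      · exact ((hTfQ i hiTf).2.1 (hdom js hjsF itop)).2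
          (hasc i itop (by simp [Fin.lt_def, hitop]; omega))
      · exact ((hTfQ i hiTf).2.2 (hdom js hjsF i0)).2
          (hdesc i0 i (by simp [Fin.lt_def, hi0]; omega))
    -- rank function and ES
    set rnk : Fin m → ℕ := fun i => (Tf.filter (fun i' => le js (s i') (s i))).card with hrnk
    have hrank : ∀ i₁ ∈ Tf, ∀ i₂ ∈ Tf, rnk i₁ ≤ rnk i₂ → le js (s i₁) (s i₂) := by
      intro i₁ h₁ i₂ h₂ hr
      by_contra hno
      have hd₁ : s i₁ ∈ dom js := (hTfQ i₁ h₁).1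
      have hd₂ : s i₂ ∈ dom js := (hTfQ i₂ h₂).1
      have hle : le js (s i₂) (s i₁) := (htot js _ hd₁ _ hd₂).resolve_left hno
      have hsub : Tf.filter (fun i' => le js (s i') (s i₂)) ⊆
          Tf.filter (fun i' => le js (s i') (s i₁)) := by
        intro t htm
        obtain ⟨htf, hlt⟩ := Finset.mem_filter.mp htm
        exact Finset.mem_filter.mpr
          ⟨htf, htrans js _ (hTfQ t htf).1 _ hd₂ _ hd₁ hlt hle⟩
      have h₁in : i₁ ∈ Tf.filter (fun i' => le js (s i') (s i₁)) :=
        Finset.mem_filter.mpr ⟨h₁, hrefl js _ hd₁⟩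
      have h₁nin : i₁ ∉ Tf.filter (fun i' => le js (s i') (s i₂)) := by
        intro hc
        exact hno (Finset.mem_filter.mp hc).2
      have hlt : (Tf.filter (fun i' => le js (s i') (s i₂))).card <
          (Tf.filter (fun i' => le js (s i') (s i₁))).card :=
        Finset.card_lt_card ((Finset.ssubset_iff_of_subset hsub).mpr ⟨i₁, h₁in, h₁nin⟩)
      simp only [hrnk] at hr
      omega
    set e := Tf.orderIsoOfFin (rfl : Tf.card = Tf.card) with he
    set w : Fin Tf.card → ℕ := fun x => rnk (e x : Fin m) * m + (e x : Fin m).val with hw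
    have hNf : (Bfun d r) * (Bfun d r) < Tf.card := by
      have : (Bfun d r)^2 = Bfun d r * Bfun d r := by ring
      omega
    obtain ⟨g2, hg2mono, hg2cases⟩ := my_erdos_szekeres w hNf
    set s' : Fin (Bfun d r + 1) → α := fun x => s ((e (g2 x)) : Fin m) with hs'
    have hidx : ∀ {x y}, x < y → ((e (g2 x)) : Fin m) < ((e (g2 y)) : Fin m) := by
      intro x y hxy
      exact_mod_cast e.strictMono (hg2mono hxy)
    have hmemTf : ∀ x, ((e (g2 x)) : Fin m) ∈ Tf := fun x => (e (g2 x)).2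
    have hwr : ∀ {x y : Fin (Bfun d r + 1)}, w (g2 x) ≤ w (g2 y) →
        rnk ((e (g2 x)) : Fin m) ≤ rnk ((e (g2 y)) : Fin m) := by
      intro x y hxy
      simp only [hw] at hxy
      by_contra hcon
      push_neg at hcon
      have h1 : ((e (g2 x)) : Fin m).val < m := (((e (g2 x)) : Fin m)).isLt
      have h2 : ((e (g2 y)) : Fin m).val < m := (((e (g2 y)) : Fin m)).isLt
      have h3 : (rnk ((e (g2 y)) : Fin m) + 1) * m ≤ rnk ((e (g2 x)) : Fin m) * m :=
        Nat.mul_le_mul_right m (by omega)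
      rw [add_mul, one_mul] at h3
      omega
    have hcontra := ih (insert js F) (by rw [Finset.card_insert_of_notMem hjsF]; omega)
      (Bfun d r + 1) s'
      (by
        intro x y hxy
        have := hinj hxy
        have h2 : ((e (g2 x)) : Fin m) = ((e (g2 y)) : Fin m) := this
        have h3 : e (g2 x) = e (g2 y) := Subtype.ext h2
        have h4 : g2 x = g2 y := e.injective h3
        exact hg2mono.injective h4)
      (by
        intro j hj i
        rcases Finset.mem_insert.mp hj with rfl | hjF
        · exact (hTfQ _ (hmemTf i)).1
        · exact hdom j hjF _)
      (by
        intro j hj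
        rcases Finset.mem_insert.mp hj with rfl | hjF
        · rcases hg2cases with hmono | hanti
          · left
            intro x₁ x₂ hx
            exact hrank _ (hmemTf x₁) _ (hmemTf x₂) (hwr (hmono _ _ (le_of_lt hx)))
          · right
            intro x₁ x₂ hx
            exact hrank _ (hmemTf x₂) _ (hmemTf x₁) (hwr (hanti _ _ (le_of_lt hx)))
        · rcases halign j hjF with hasc | hdesc
          · left
            intro x₁ x₂ hx
            exact hasc _ _ (hidx hx)
          · right
            intro x₁ x₂ hx
            exact hdesc _ _ (hidx hx))
    omega


theorem lemmaA [Fintype α]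
    (hrefl : ∀ j, ∀ a ∈ dom j, le j a a)
    (htrans : ∀ j, ∀ a ∈ dom j, ∀ b ∈ dom j, ∀ c ∈ dom j, le j a b → le j b c → le j a c)
    (htot : ∀ j, ∀ a ∈ dom j, ∀ b ∈ dom j, le j a b ∨ le j b a)
    (hloc : ∀ a : α, ∃ V : Finset ι, V.card ≤ d ∧ ∀ j, a ∈ dom j → j ∈ V)
    (hcov : ∀ b c : α, b ≠ c → ∃ T : Finset ι, T.card ≤ d ∧ ∀ a, a ≠ b → a ≠ c →
      ∃ j ∈ T, a ∈ dom j ∧ (b ∈ dom j → le j b a ∧ ¬ le j a b) ∧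
        (c ∈ dom j → le j c a ∧ ¬ le j a c)) :
    Fintype.card α ≤ Bfun d d :=
  lemmaA_aux d dom le hrefl htrans htot hloc hcov d ∅ (by simp) (Fintype.card α)
    (⇑(Fintype.equivFin α).symm) ((Fintype.equivFin α).symm.injective)
    (fun j hj => absurd hj (Finset.notMem_empty j))
    (fun j hj => absurd hj (Finset.notMem_empty j))
end LemAmain

/-- the `B`-side of a difference graph is also nested -/
lemma bside_nested {W : Type*} {G : SimpleGraph W} {A B : Set W}
    (hdisj : Disjoint A B)
    (hadj : ∀ u v : W, G.Adj u v → ((u ∈ A ∧ v ∈ B) ∨ (u ∈ B ∧ v ∈ A)))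
    (hnest : ∀ a ∈ A, ∀ a' ∈ A,
      G.neighborSet a ⊆ G.neighborSet a' ∨ G.neighborSet a' ⊆ G.neighborSet a) :
    ∀ u ∈ B, ∀ v ∈ B,
      G.neighborSet u ⊆ G.neighborSet v ∨ G.neighborSet v ⊆ G.neighborSet u := by
  intro u hu v hv
  by_contra hcon
  push_neg at hcon
  obtain ⟨x, hxu, hxv⟩ := Set.not_subset.mp hcon.1
  obtain ⟨y, hyv, hyu⟩ := Set.not_subset.mp hcon.2
  have hxA : x ∈ A := by
    rcases hadj u x hxu with ⟨huA, _⟩ | ⟨_, hxA⟩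
    · exact absurd huA (fun h => hdisj.ne_of_mem h hu rfl)
    · exact hxA
  have hyA : y ∈ A := by
    rcases hadj v y hyv with ⟨hvA, _⟩ | ⟨_, hyA⟩
    · exact absurd hvA (fun h => hdisj.ne_of_mem h hv rfl)
    · exact hyA
  rcases hnest x hxA y hyA with hxy | hyx
  · exact hyu (((G.mem_neighborSet _ _).mpr ((hxy ((G.mem_neighborSet _ _).mpr hxu.symm)))).symm)
  · exact hxv (((G.mem_neighborSet _ _).mpr ((hyx ((G.mem_neighborSet _ _).mpr hyv.symm)))).symm)

open scoped Classical in
/-- the "star at v" subgraph -/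
def starSub {V : Type*} (H : SimpleGraph V) (v : V) : H.Subgraph where
  verts := Set.univ
  Adj := fun x y => H.Adj x y ∧ (x = v ∨ y = v)
  adj_sub := fun h => h.1
  edge_vert := fun _ => trivial
  symm := ⟨fun x y h => ⟨h.1.symm, h.2.symm⟩⟩

lemma starSub_diff {V : Type*} (H : SimpleGraph V) (v : V) :
    IsDifferenceGraph (starSub H v).coe := by
  refine ⟨{x | (x : V) = v}, {x | (x : V) ≠ v}, ?_, ?_, ?_, ?_⟩
  · rw [Set.disjoint_left]
    intro a ha hb
    exact hb ha
  · ext x; simp [em]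
  · intro u w huw
    have h' : H.Adj u w ∧ ((u : V) = v ∨ (w : V) = v) := huw
    rcases h'.2 with h | h
    · exact Or.inl ⟨h, fun hw => H.ne_of_adj h'.1 (by rw [h, hw])⟩
    · exact Or.inr ⟨fun hu => H.ne_of_adj h'.1 (by rw [hu, h]), h⟩
  · intro a ha a' ha'
    have : a = a' := Subtype.ext (ha.trans ha'.symm)
    subst this
    exact Or.inl (le_refl _)

open scoped Classical in
lemma diff_cover_set_nonempty {V : Type*} [Fintype V] (H : SimpleGraph V) :
    {k | ∃ C : Finset H.Subgraph, (∀ G ∈ C, IsDifferenceGraph G.coe) ∧ C.sup id = ⊤ ∧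
      ∀ v : V, (C.filter fun G => v ∈ G.verts).card ≤ k}.Nonempty := by
  classical
  refine ⟨(Finset.univ.image (starSub H)).card, Finset.univ.image (starSub H), ?_, ?_, ?_⟩
  · intro G hG
    obtain ⟨v, _, rfl⟩ := Finset.mem_image.mp hG
    exact starSub_diff H v
  · apply le_antisymm le_top
    refine ⟨?_, ?_⟩
    · intro v _
      by_cases hV : Nonempty V
      · have hmem : starSub H v ∈ Finset.univ.image (starSub H) :=
          Finset.mem_image.mpr ⟨v, Finset.mem_univ v, rfl⟩
        have := Finset.le_sup (f := id) hmem
        exact this.1 (by trivial : v ∈ (starSub H v).verts)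
      · exact absurd ⟨v⟩ hV
    · intro x y hxy
      have hmem : starSub H x ∈ Finset.univ.image (starSub H) :=
        Finset.mem_image.mpr ⟨x, Finset.mem_univ x, rfl⟩
      have hle := Finset.le_sup (f := id) hmem
      exact hle.2 ⟨hxy, Or.inl rfl⟩
  · intro v
    exact Finset.card_filter_le _ _

-- helper: extraction from finset sup
lemma sup_adj_exists {V : Type*} {H : SimpleGraph V} (C : Finset H.Subgraph)
    {x y : V} (h : (C.sup id).Adj x y) : ∃ G ∈ C, G.Adj x y := by
  classical
  refine Finset.sup_induction (p := fun K : H.Subgraph => K.Adj x y → ∃ G ∈ C, G.Adj x y)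
    ?_ ?_ ?_ h
  · intro hb
    simp at hb
  · intro a₁ h₁ a₂ h₂ hadj
    rcases (Subgraph.sup_adj).mp hadj with h | h
    · exact h₁ h
    · exact h₂ h
  · intro G hG hadj
    exact ⟨G, hG, hadj⟩

section Vert
variable {n : ℕ}

def vert (a : Fin n) : P12 n := ⟨{a}, Or.inl (Finset.card_singleton a)⟩

def pvert (b c : Fin n) (h : b ≠ c) : P12 n := ⟨{b, c}, Or.inr (Finset.card_pair h)⟩

lemma vert_inj : Function.Injective (vert (n := n)) := by
  intro a b h
  have := congrArg Subtype.val h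
  simpa [vert] using this

lemma adj_vert_pvert {a b c : Fin n} (hab : a ≠ b) (hac : a ≠ c) (hbc : b ≠ c) :
    (G12 n).Adj (vert a) (pvert b c hbc) := by
  refine Or.inl ⟨Finset.card_singleton a, Finset.card_pair hbc, ?_⟩
  simp [vert, pvert, Finset.singleton_subset_iff, hab, hac]

lemma not_adj_vert_pvert {x b c : Fin n} (hx : x = b ∨ x = c) (hbc : b ≠ c) :
    ¬ (G12 n).Adj (vert x) (pvert b c hbc) := by
  intro h
  rcases h with ⟨_, _, h3⟩ | ⟨h1, _, _⟩
  · apply h3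
    simp only [vert, pvert, Finset.singleton_subset_iff, Finset.mem_insert, Finset.mem_singleton]
    tauto
  · simp [pvert, Finset.card_pair hbc] at h1
end Vert

theorem diffCN_bound (n : ℕ) :
    n ≤ (4*(diffCN (G12 n)+1))^(2^(diffCN (G12 n)+1)) := by
  classical
  set d := diffCN (G12 n) with hd
  have hmem : d ∈ {k | ∃ C : Finset (G12 n).Subgraph,
      (∀ G ∈ C, IsDifferenceGraph G.coe) ∧ C.sup id = ⊤ ∧
      ∀ v : P12 n, (C.filter fun G => v ∈ G.verts).card ≤ k} :=
    Nat.sInf_mem (diff_cover_set_nonempty (G12 n))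
  obtain ⟨C, hC, hsup, hlocC⟩ := hmem
  have hdiff : ∀ G : {G : (G12 n).Subgraph // G ∈ C}, IsDifferenceGraph (G.1.coe) :=
    fun G => hC G.1 G.2
  choose A B hdisj huniv hadjc hnest using hdiff
  have hnestB : ∀ G, ∀ u ∈ B G, ∀ v ∈ B G,
      G.1.coe.neighborSet u ⊆ G.1.coe.neighborSet v ∨
      G.1.coe.neighborSet v ⊆ G.1.coe.neighborSet u :=
    fun G => bside_nested (hdisj G) (hadjc G) (hnest G)
  set ι := ({G : (G12 n).Subgraph // G ∈ C} × Bool) with hι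
  set dom : ι → Set (Fin n) := fun j => {a | ∃ h : vert a ∈ j.1.1.verts,
    (⟨vert a, h⟩ : j.1.1.verts) ∈ (cond j.2 (A j.1) (B j.1))} with hdomdef
  set lef : ι → Fin n → Fin n → Prop := fun j a b =>
    ∀ (ha : vert a ∈ j.1.1.verts) (hb : vert b ∈ j.1.1.verts),
      j.1.1.coe.neighborSet ⟨vert a, ha⟩ ⊆ j.1.1.coe.neighborSet ⟨vert b, hb⟩ with hlefdef
  have hmain : Fintype.card (Fin n) ≤ Bfun d d := by
    apply lemmaA d dom lef
    · -- refl
      intro j a ha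
      intro h1 h2
      exact subset_rfl
    · -- trans
      intro j a ha b hb c hc h1 h2
      obtain ⟨hbv, _⟩ := hb
      intro hav hcv
      exact (h1 hav hbv).trans (h2 hbv hcv)
    · -- total
      intro j a ha b hb
      obtain ⟨hav, haside⟩ := ha
      obtain ⟨hbv, hbside⟩ := hb
      cases hj2 : j.2 with
      | true =>
        rw [hj2] at haside hbside
        simp only [Bool.cond_true] at haside hbside
        rcases hnest j.1 _ haside _ hbside with h | h
        · exact Or.inl (fun ha' hb' => h)
        · exact Or.inr (fun hb' ha' => h)
      | false =>
        rw [hj2] at haside hbside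
        simp only [Bool.cond_false] at haside hbside
        rcases hnestB j.1 _ haside _ hbside with h | h
        · exact Or.inl (fun ha' hb' => h)
        · exact Or.inr (fun hb' ha' => h)
    · -- locality
      intro a
      refine ⟨(C.attach.filter (fun G => vert a ∈ G.1.verts)).image
        (fun G => ((G : {G : (G12 n).Subgraph // G ∈ C}),
          if _h : ∃ hv : vert a ∈ G.1.verts, (⟨vert a, hv⟩ : G.1.verts) ∈ A G
            then true else false)), ?_, ?_⟩
      · calc _ ≤ (C.attach.filter (fun G => vert a ∈ G.1.verts)).card :=
            Finset.card_image_le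
        _ ≤ (C.filter (fun G => vert a ∈ G.verts)).card := by
            apply Finset.card_le_card_of_injOn (fun G => G.1)
            · intro G hG
              obtain ⟨_, h2⟩ := Finset.mem_filter.mp hG
              exact Finset.mem_filter.mpr ⟨G.2, h2⟩
            · intro x _ y _ hxy
              exact Subtype.ext hxy
        _ ≤ d := hlocC (vert a)
      · intro j hj
        obtain ⟨jG, jb⟩ := j
        obtain ⟨hav, haside⟩ := hj
        apply Finset.mem_image.mpr
        refine ⟨jG, Finset.mem_filter.mpr ⟨Finset.mem_attach _ _, hav⟩, ?_⟩
        cases jb with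
        | true =>
          simp only [Bool.cond_true] at haside
          rw [dif_pos ⟨hav, haside⟩]
        | false =>
          simp only [Bool.cond_false] at haside
          rw [dif_neg]
          rintro ⟨hv, hvA⟩
          exact Set.disjoint_left.mp (hdisj jG) hvA haside
    · -- covering
      intro b c hbc
      refine ⟨(C.attach.filter (fun G => pvert b c hbc ∈ G.1.verts)).image
        (fun G => ((G : {G : (G12 n).Subgraph // G ∈ C}),
          if _h : ∃ hv : pvert b c hbc ∈ G.1.verts, (⟨pvert b c hbc, hv⟩ : G.1.verts) ∈ A G
            then false else true)), ?_, ?_⟩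
      · calc _ ≤ (C.attach.filter (fun G => pvert b c hbc ∈ G.1.verts)).card :=
            Finset.card_image_le
        _ ≤ (C.filter (fun G => pvert b c hbc ∈ G.verts)).card := by
            apply Finset.card_le_card_of_injOn (fun G => G.1)
            · intro G hG
              obtain ⟨_, h2⟩ := Finset.mem_filter.mp hG
              exact Finset.mem_filter.mpr ⟨G.2, h2⟩
            · intro x _ y _ hxy
              exact Subtype.ext hxy
        _ ≤ d := hlocC (pvert b c hbc)
      · intro a hab hac
        have hadj : (G12 n).Adj (vert a) (pvert b c hbc) := adj_vert_pvert hab hac hbc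
        have hadj' : (C.sup id).Adj (vert a) (pvert b c hbc) := by
          rw [hsup]
          exact hadj
        obtain ⟨G, hGC, hGadj⟩ := sup_adj_exists C hadj'
        have hva : vert a ∈ G.verts := G.edge_vert hGadj
        have hvp : pvert b c hbc ∈ G.verts := G.edge_vert hGadj.symm
        have hcoe : G.coe.Adj ⟨vert a, hva⟩ ⟨pvert b c hbc, hvp⟩ := by
          rw [Subgraph.coe_adj]
          exact hGadj
        have hpNa : (⟨pvert b c hbc, hvp⟩ : G.verts) ∈
            G.coe.neighborSet ⟨vert a, hva⟩ := hcoe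
        rcases hadjc ⟨G, hGC⟩ _ _ hcoe with ⟨haA, hpB⟩ | ⟨haB, hpA⟩
        · -- singleton side = A, j.2 = true
          set j : ι := (⟨G, hGC⟩, true) with hjdef
          have hkey : ∀ x : Fin n, (x = b ∨ x = c) → x ∈ dom j →
              lef j x a ∧ ¬ lef j a x := by
            intro x hx hxdom
            obtain ⟨hvx, hxA⟩ := hxdom
            have hnadj : (⟨pvert b c hbc, hvp⟩ : G.verts) ∉
                G.coe.neighborSet ⟨vert x, hvx⟩ := by
              intro hcadj
              exact not_adj_vert_pvert hx hbc (G.adj_sub ((Subgraph.coe_adj _ _ _).mp hcadj))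
            rcases hnest ⟨G, hGC⟩ _ hxA _ haA with hxa | hax
            · refine ⟨fun hx' ha' => hxa, fun hle => ?_⟩
              exact hnadj (hle hva hvx hpNa)
            · exact absurd (hax hpNa) hnadj
          refine ⟨j, ?_, ⟨hva, haA⟩, fun hb' => hkey b (Or.inl rfl) hb',
            fun hc' => hkey c (Or.inr rfl) hc'⟩
          apply Finset.mem_image.mpr
          refine ⟨⟨G, hGC⟩, Finset.mem_filter.mpr ⟨Finset.mem_attach _ _, hvp⟩, ?_⟩
          rw [dif_neg (by rintro ⟨hv, hvA⟩; exact Set.disjoint_left.mp (hdisj ⟨G, hGC⟩) hvA hpB)]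
        · -- singleton side = B, j.2 = false
          set j : ι := (⟨G, hGC⟩, false) with hjdef
          have hkey : ∀ x : Fin n, (x = b ∨ x = c) → x ∈ dom j →
              lef j x a ∧ ¬ lef j a x := by
            intro x hx hxdom
            obtain ⟨hvx, hxB⟩ := hxdom
            have hnadj : (⟨pvert b c hbc, hvp⟩ : G.verts) ∉
                G.coe.neighborSet ⟨vert x, hvx⟩ := by
              intro hcadj
              exact not_adj_vert_pvert hx hbc (G.adj_sub ((Subgraph.coe_adj _ _ _).mp hcadj))
            rcases hnestB ⟨G, hGC⟩ _ hxB _ haB with hxa | hax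
            · refine ⟨fun hx' ha' => hxa, fun hle => ?_⟩
              exact hnadj (hle hva hvx hpNa)
            · exact absurd (hax hpNa) hnadj
          refine ⟨j, ?_, ⟨hva, haB⟩, fun hb' => hkey b (Or.inl rfl) hb',
            fun hc' => hkey c (Or.inr rfl) hc'⟩
          apply Finset.mem_image.mpr
          refine ⟨⟨G, hGC⟩, Finset.mem_filter.mpr ⟨Finset.mem_attach _ _, hvp⟩, ?_⟩
          rw [dif_pos ⟨hvp, hpA⟩]
  rw [Fintype.card_fin] at hmain
  calc n ≤ Bfun d d := hmain
  _ ≤ (4*(d+1))^(2^(d+1)) := Bfun_le' d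

section FinP

variable (P : Type*) [PartialOrder P] [Finite P]

instance : Finite (PartialLinExt P) := by
  have : Finite Prop := Finite.of_equiv Bool Equiv.propEquivBool.symm
  apply Finite.of_injective (fun l : PartialLinExt P => (l.dom, l.rel))
  intro l₁ l₂ h
  obtain ⟨d₁, r₁, _, _, _, _, _⟩ := l₁
  obtain ⟨d₂, r₂, _, _, _, _, _⟩ := l₂
  simp only [Prod.mk.injEq] at h
  obtain ⟨h1, h2⟩ := h
  subst h1; subst h2
  rfl

/-- a global linear extension as a partial linear extension -/
lemma exists_plex_rel (r' : P → P → Prop) (hr' : IsPartialOrder P r')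
    (hle : ∀ x y : P, x ≤ y → r' x y) :
    ∃ l : PartialLinExt P, l.dom = Set.univ ∧ ∀ x y, r' x y → l.rel x y := by
  haveI := hr'
  obtain ⟨s, hs, hrs⟩ := extend_partialOrder r' 
  letI := hs
  refine ⟨⟨Set.univ, s, fun x _ => refl_of s x,
    fun x _ y _ h1 h2 => antisymm_of s h1 h2,
    fun x _ y _ z _ h1 h2 => trans_of s h1 h2,
    fun x _ y _ => total_of s x y,
    fun x _ y _ h => hrs _ _ (hle x y h)⟩, rfl, fun x y h => hrs _ _ h⟩

lemma ldim_set_nonempty :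
    {k | ∃ L : Set (PartialLinExt P), IsLocalRealizer L ∧
      ∀ x : P, {l ∈ L | x ∈ l.dom}.Finite ∧ {l ∈ L | x ∈ l.dom}.ncard ≤ k}.Nonempty := by
  classical
  refine ⟨Nat.card (PartialLinExt P), Set.univ, ⟨?_, ?_, ?_⟩, ?_⟩
  · obtain ⟨l, _, _⟩ := exists_plex_rel P (· ≤ ·) (by infer_instance) (fun _ _ h => h)
    exact ⟨l, trivial⟩
  · intro x y hxy
    obtain ⟨l, hdom, hrel⟩ := exists_plex_rel P (· ≤ ·) (by infer_instance) (fun _ _ h => h)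
    exact ⟨l, trivial, by rw [hdom]; trivial, by rw [hdom]; trivial, hrel _ _ hxy.le⟩
  · intro x y hxy hyx
    set r' : P → P → Prop := fun u v => u ≤ v ∨ (u ≤ x ∧ y ≤ v) with hr'def
    have hr' : IsPartialOrder P r' :=
      { refl := fun a => Or.inl le_rfl
        trans := by
            intro a b c hab hbc
            rcases hab with h1 | ⟨h1, h2⟩
            · rcases hbc with h3 | ⟨h3, h4⟩
              · exact Or.inl (h1.trans h3)
              · exact Or.inr ⟨h1.trans h3, h4⟩
            · rcases hbc with h3 | ⟨h3, h4⟩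
              · exact Or.inr ⟨h1, h2.trans h3⟩
              · exact Or.inr ⟨h1, h4⟩
        antisymm := by
          intro a b hab hba
          rcases hab with h1 | ⟨h1, h2⟩
          · rcases hba with h3 | ⟨h3, h4⟩
            · exact le_antisymm h1 h3
            · exact absurd ((h4.trans h1).trans h3) hyx
          · rcases hba with h3 | ⟨h3, h4⟩
            · exact absurd ((h2.trans h3).trans h1) hyx
            · exact absurd (h2.trans h3) hyx }
    obtain ⟨l, hdom, hrel⟩ := exists_plex_rel P r' hr' (fun u v h => Or.inl h)
    exact ⟨l, trivial, by rw [hdom]; trivial, by rw [hdom]; trivial,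
      hrel x y (Or.inr ⟨le_rfl, le_rfl⟩)⟩
  · intro x
    refine ⟨Set.toFinite _, ?_⟩
    rw [← Set.ncard_univ]
    exact Set.ncard_le_ncard (Set.subset_univ _) (Set.toFinite _)
end FinP

section Verts
variable {n : ℕ}

lemma vert_le_pvert {x b c : Fin n} (h : x = b ∨ x = c) (hbc : b ≠ c) :
    vert x ≤ pvert b c hbc := by
  have : ({x} : Finset (Fin n)) ≤ {b, c} := by
    rw [Finset.le_iff_subset, Finset.singleton_subset_iff]
    rcases h with rfl | rfl
    · exact Finset.mem_insert_self _ _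
    · exact Finset.mem_insert_of_mem (Finset.mem_singleton_self _)
  exact this

lemma vert_ne_pvert' {a b c : Fin n} (hbc : b ≠ c) : vert a ≠ pvert b c hbc := by
  intro h
  have := congrArg (fun z : P12 n => z.1.card) h
  simp [vert, pvert, Finset.card_pair hbc] at this

lemma not_pvert_le_vert {a b c : Fin n} (hbc : b ≠ c) : ¬ pvert b c hbc ≤ vert a := by
  intro h
  have hsub : ({b, c} : Finset (Fin n)) ⊆ {a} := h
  have := Finset.card_le_card hsub
  rw [Finset.card_pair hbc, Finset.card_singleton] at this
  omega

lemma not_vert_le_pvert {a b c : Fin n} (hab : a ≠ b) (hac : a ≠ c) (hbc : b ≠ c) :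
    ¬ vert a ≤ pvert b c hbc := by
  intro h
  have hsub : ({a} : Finset (Fin n)) ⊆ {b, c} := h
  have := hsub (Finset.mem_singleton_self a)
  rcases Finset.mem_insert.mp this with h' | h'
  · exact hab h'
  · exact hac (Finset.mem_singleton.mp h')
end Verts

theorem ldim_bound (n : ℕ) : n ≤ Bfun (ldim (P12 n)) (ldim (P12 n)) := by
  classical
  set k := ldim (P12 n) with hk
  have hmem : k ∈ {k | ∃ L : Set (PartialLinExt (P12 n)), IsLocalRealizer L ∧
      ∀ x : P12 n, {l ∈ L | x ∈ l.dom}.Finite ∧ {l ∈ L | x ∈ l.dom}.ncard ≤ k} :=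
    Nat.sInf_mem (ldim_set_nonempty (P12 n))
  obtain ⟨L, ⟨hLne, hcomp, hinc⟩, hfin⟩ := hmem
  have hmain := lemmaA (α := Fin n) (ι := PartialLinExt (P12 n)) k
    (fun l => {a | l ∈ L ∧ vert a ∈ l.dom})
    (fun l a b => l.rel (vert a) (vert b))
    (fun l a ha => l.refl _ ha.2)
    (fun l a ha b hb c hc h1 h2 => l.trans' _ ha.2 _ hb.2 _ hc.2 h1 h2)
    (fun l a ha b hb => l.total _ ha.2 _ hb.2)
    ?_ ?_
  · rwa [Fintype.card_fin] at hmain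
  · intro a
    refine ⟨(hfin (vert a)).1.toFinset, ?_, ?_⟩
    · rw [← Set.ncard_eq_toFinset_card _ (hfin _).1]
      exact (hfin (vert a)).2
    · intro l hl
      rw [Set.Finite.mem_toFinset]
      exact ⟨hl.1, hl.2⟩
  · intro b c hbc
    refine ⟨(hfin (pvert b c hbc)).1.toFinset, ?_, ?_⟩
    · rw [← Set.ncard_eq_toFinset_card _ (hfin _).1]
      exact (hfin (pvert b c hbc)).2
    · intro a hab hac
      obtain ⟨l, hlL, hpd, had, hrel⟩ := hinc (pvert b c hbc) (vert a)
        (not_pvert_le_vert hbc) (not_vert_le_pvert hab hac hbc)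
      have hkey : ∀ x : Fin n, (x = b ∨ x = c) → (l ∈ L ∧ vert x ∈ l.dom) →
          l.rel (vert x) (vert a) ∧ ¬ l.rel (vert a) (vert x) := by
        intro x hx hxdom
        obtain ⟨_, hxd⟩ := hxdom
        have hrelxp : l.rel (vert x) (pvert b c hbc) :=
          l.le_imp_rel _ hxd _ hpd (vert_le_pvert hx hbc)
        have h1 : l.rel (vert x) (vert a) := l.trans' _ hxd _ hpd _ had hrelxp hrel
        refine ⟨h1, fun hax => ?_⟩
        have hrelap : l.rel (vert a) (pvert b c hbc) :=
          l.trans' _ had _ hxd _ hpd hax hrelxp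
        exact vert_ne_pvert' hbc (l.antisymm _ had _ hpd hrelap hrel)
      exact ⟨l, Set.Finite.mem_toFinset _ |>.mpr ⟨hlL, hpd⟩, ⟨hlL, had⟩,
        fun hb' => hkey b (Or.inl rfl) hb', fun hc' => hkey c (Or.inr rfl) hc'⟩

section Ana
open Real Filter

lemma logb_two_mono {x y : ℝ} (h : 0 < x) (hxy : x ≤ y) : logb 2 x ≤ logb 2 y :=
  Real.logb_le_logb_of_le (by norm_num) h hxy

lemma logb_two_pow_nat (k : ℕ) : logb 2 ((2:ℝ)^k) = k := by
  rw [Real.logb_pow, Real.logb_self_eq_one (by norm_num)]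
  ring

lemma key_pointwise (D : ℕ → ℕ) (hD : ∀ n : ℕ, n ≤ (4*(D n+1))^(2^(D n+1))) :
    ∀ n : ℕ, 4294967296 ≤ n →
      0 ≤ (D n : ℝ) - Real.logb 2 (Real.logb 2 n) +
        (1 + 1 / Real.log 2) * Real.logb 2 (Real.logb 2 (Real.logb 2 n)) := by
  intro n hn
  have hlog2 : (0:ℝ) < Real.log 2 := Real.log_pos (by norm_num)
  have hlog2' : Real.log 2 < 1 := by
    have := Real.log_two_lt_d9
    linarith
  have hinv : (1:ℝ) ≤ 1 / Real.log 2 := by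
    rw [le_div_iff₀ hlog2]
    linarith
  have hx : (2:ℝ)^(32:ℕ) ≤ (n:ℝ) := by
    have : ((4294967296:ℕ):ℝ) ≤ (n:ℝ) := by exact_mod_cast hn
    norm_num at this ⊢
    linarith
  have hxpos : (0:ℝ) < (n:ℝ) := lt_of_lt_of_le (by positivity) hx
  set L := Real.logb 2 (n:ℝ) with hLdef
  have hL32 : (32:ℝ) ≤ L := by
    calc (32:ℝ) = logb 2 ((2:ℝ)^(32:ℕ)) := (logb_two_pow_nat 32).symm
    _ ≤ L := logb_two_mono (by positivity) hx
  have hLpos : (0:ℝ) < L := by linarith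
  set LL := Real.logb 2 L with hLLdef
  have hLL5 : (5:ℝ) ≤ LL := by
    calc (5:ℝ) = logb 2 ((2:ℝ)^(5:ℕ)) := (logb_two_pow_nat 5).symm
    _ ≤ LL := logb_two_mono (by positivity) (by norm_num; linarith)
  have hLLpos : (0:ℝ) < LL := by linarith
  set LLL := Real.logb 2 LL with hLLLdef
  have hLLL2 : (2:ℝ) ≤ LLL := by
    calc (2:ℝ) = logb 2 ((2:ℝ)^(2:ℕ)) := (logb_two_pow_nat 2).symm
    _ ≤ LLL := logb_two_mono (by positivity) (by norm_num; linarith)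
  rcases le_or_gt LL (D n : ℝ) with hcase | hcase
  · have hc : (0:ℝ) ≤ 1 + 1 / Real.log 2 := by positivity
    nlinarith
  · -- D n < LL
    set d : ℝ := (D n : ℝ) with hddef
    have hdnn : (0:ℝ) ≤ d := Nat.cast_nonneg _
    set A : ℝ := 4*(d+1) with hAdef
    have hA4 : (4:ℝ) ≤ A := by simp [hAdef]; linarith
    have hApos : (0:ℝ) < A := by linarith
    have hlogA2 : (2:ℝ) ≤ logb 2 A := by
      calc (2:ℝ) = logb 2 ((2:ℝ)^(2:ℕ)) := (logb_two_pow_nat 2).symm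
      _ ≤ logb 2 A := logb_two_mono (by positivity) (by norm_num; linarith)
    have hlogApos : (0:ℝ) < logb 2 A := by linarith
    -- main counting bound
    have hcast : (n:ℝ) ≤ A^(2^(D n+1)) := by
      have h0 := hD n
      have h1 : ((n:ℕ):ℝ) ≤ (((4*(D n+1))^(2^(D n+1)) : ℕ) : ℝ) := by exact_mod_cast h0
      calc (n:ℝ) ≤ (((4*(D n+1))^(2^(D n+1)) : ℕ) : ℝ) := h1
      _ = A^(2^(D n+1)) := by push_cast [hAdef, hddef]; ring
    have hL_le : L ≤ (2:ℝ)^(D n + 1) * logb 2 A := by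
      calc L ≤ logb 2 (A^(2^(D n+1))) := logb_two_mono hxpos hcast
      _ = ((2^(D n+1) : ℕ) : ℝ) * logb 2 A := by rw [Real.logb_pow]
      _ = (2:ℝ)^(D n + 1) * logb 2 A := by push_cast; ring
    have hLL_le : LL ≤ (d + 1) + logb 2 (logb 2 A) := by
      calc LL ≤ logb 2 ((2:ℝ)^(D n+1) * logb 2 A) := logb_two_mono hLpos hL_le
      _ = logb 2 ((2:ℝ)^(D n+1)) + logb 2 (logb 2 A) :=
          Real.logb_mul (by positivity) (by linarith)
      _ = (d + 1) + logb 2 (logb 2 A) := by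
          rw [logb_two_pow_nat]
          push_cast [hddef]
          ring
    -- bound logb 2 A ≤ 2 * LLL  via A ≤ LL^2
    have hALL : A ≤ LL^(2:ℕ) := by
      have : A ≤ 4*LL + 4 := by simp [hAdef]; linarith
      nlinarith
    have hlogA_le : logb 2 A ≤ 2 * LLL := by
      calc logb 2 A ≤ logb 2 (LL^(2:ℕ)) := logb_two_mono hApos hALL
      _ = ((2:ℕ):ℝ) * LLL := by rw [Real.logb_pow]
      _ = 2 * LLL := by norm_num
    have hLLLpos : (0:ℝ) < LLL := by linarith
    have hloglogA : logb 2 (logb 2 A) ≤ 1 + logb 2 LLL := by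
      calc logb 2 (logb 2 A) ≤ logb 2 (2 * LLL) := logb_two_mono hlogApos hlogA_le
      _ = logb 2 2 + logb 2 LLL := Real.logb_mul (by norm_num) (by linarith)
      _ = 1 + logb 2 LLL := by rw [Real.logb_self_eq_one (by norm_num)]
    have hlogLLL : logb 2 LLL ≤ (LLL - 1) / Real.log 2 := by
      rw [Real.logb, div_le_div_iff_of_pos_right hlog2]
      exact Real.log_le_sub_one_of_pos hLLLpos
    -- combine
    have hfinal : LL ≤ d + 2 + (LLL - 1) / Real.log 2 := by linarith
    have hexp : (1 + 1 / Real.log 2) * LLL = LLL + LLL / Real.log 2 := by ring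
    have h2 : (LLL - 1) / Real.log 2 ≤ LLL / Real.log 2 - 1 := by
      rw [sub_div]
      have : (1:ℝ) ≤ 1 / Real.log 2 := hinv
      linarith
    linarith

end Ana

lemma liminf_nonneg_of_eventually (f : ℕ → ℝ) (h : ∀ᶠ n in Filter.atTop, 0 ≤ f n) :
    0 ≤ Filter.liminf f Filter.atTop := by
  rw [Filter.liminf_eq]
  by_cases hbdd : BddAbove {a | ∀ᶠ n in Filter.atTop, a ≤ f n}
  · exact le_csSup hbdd h
  · rw [csSup_of_not_bddAbove hbdd, Real.sSup_empty]

lemma ldim_bound' (n : ℕ) : n ≤ (4*(ldim (P12 n)+1))^(2^(ldim (P12 n)+1)) :=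
  le_trans (ldim_bound n) (Bfun_le' _)


/-- **Theorem.** As `n → ∞`,
`cn_ℓ(𝔇, G_{P(1,2;n)}) ≥ log₂ log₂ n − (1 + 1/ln 2)·log₂ log₂ log₂ n − o(1)`,
and consequently the same lower bound holds for `ldim(P(1,2;n))`; both stated
as liminf inequalities. -/
theorem diffCN_G12_lower_bound :
    (0 ≤ Filter.liminf
      (fun n : ℕ => (diffCN (G12 n) : ℝ) - Real.logb 2 (Real.logb 2 n) +
        (1 + 1 / Real.log 2) * Real.logb 2 (Real.logb 2 (Real.logb 2 n)))
      Filter.atTop) ∧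
    (0 ≤ Filter.liminf
      (fun n : ℕ => (ldim (P12 n) : ℝ) - Real.logb 2 (Real.logb 2 n) +
        (1 + 1 / Real.log 2) * Real.logb 2 (Real.logb 2 (Real.logb 2 n)))
      Filter.atTop) := by
  constructor
  · apply liminf_nonneg_of_eventually
    filter_upwards [Filter.eventually_ge_atTop 4294967296] with n hn
    exact key_pointwise (fun n => diffCN (G12 n)) diffCN_bound n hn
  · apply liminf_nonneg_of_eventually
    filter_upwards [Filter.eventually_ge_atTop 4294967296] with n hn
    exact key_pointwise (fun n => ldim (P12 n)) ldim_bound' n hn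
end

section
/- For all n ≥ 2, cn_ℓ(𝔅ℭ, G_{P(1,2;n)}) ≥ (1/2) · log₂(n − 1). -/
open SimpleGraph

section Aux
open Finset

/-- Abstract set-pair counting lemma. -/
lemma setpair_bound {α ι : Type*} [DecidableEq α] [DecidableEq ι] (U : Finset ι) (k : ℕ) (S : Finset α)
    (σ τ : α → Finset ι)
    (hσU : ∀ c ∈ S, σ c ⊆ U) (hτU : ∀ c ∈ S, τ c ⊆ U)
    (hσk : ∀ c ∈ S, (σ c).card ≤ k) (hτk : ∀ c ∈ S, (τ c).card ≤ k)
    (hdisj : ∀ c ∈ S, Disjoint (σ c) (τ c))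
    (hcross : ∀ c ∈ S, ∀ c' ∈ S, c ≠ c' → ((σ c) ∩ (τ c')).Nonempty) :
    S.card ≤ 2 ^ (2 * k) := by
  classical
  set e := U.card with he
  set W : α → Finset (Finset ι) :=
    fun c => U.powerset.filter (fun X => σ c ⊆ X ∧ Disjoint (τ c) X) with hW
  have hWle : ∀ c ∈ S, 2 ^ (e - 2 * k) ≤ (W c).card := by
    intro c hc
    set D := U \ (σ c ∪ τ c) with hD
    have hcard : 2 ^ (e - 2 * k) ≤ D.powerset.card := by
      rw [card_powerset]
      apply Nat.pow_le_pow_right (by norm_num)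
      rw [hD, card_sdiff_of_subset (union_subset (hσU c hc) (hτU c hc))]
      have : (σ c ∪ τ c).card ≤ 2 * k := by
        calc (σ c ∪ τ c).card ≤ (σ c).card + (τ c).card := card_union_le _ _
        _ ≤ 2 * k := by have := hσk c hc; have := hτk c hc; omega
      omega
    refine hcard.trans (card_le_card_of_injOn (fun Y => σ c ∪ Y) ?_ ?_)
    · intro Y hY
      rw [mem_coe, mem_powerset] at hY
      have hYU : Y ⊆ U := hY.trans (sdiff_subset)
      rw [mem_coe, hW, mem_filter, mem_powerset]
      refine ⟨union_subset (hσU c hc) hYU, subset_union_left, ?_⟩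
      rw [disjoint_union_right]
      refine ⟨(hdisj c hc).symm, ?_⟩
      rw [disjoint_right]
      intro a haY
      have := hY haY
      rw [hD, mem_sdiff, mem_union] at this
      tauto
    · intro Y₁ hY₁ Y₂ hY₂ hEq'
      have hEq : σ c ∪ Y₁ = σ c ∪ Y₂ := hEq'
      rw [mem_coe, mem_powerset] at hY₁ hY₂
      ext a
      constructor
      · intro ha
        have h1 : a ∈ σ c ∪ Y₂ := hEq ▸ (mem_union_right _ ha)
        have h2 := hY₁ ha
        rw [hD, mem_sdiff, mem_union] at h2
        rcases mem_union.mp h1 with h | h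
        · exact absurd h (by tauto)
        · exact h
      · intro ha
        have h1 : a ∈ σ c ∪ Y₁ := hEq.symm ▸ (mem_union_right _ ha)
        have h2 := hY₂ ha
        rw [hD, mem_sdiff, mem_union] at h2
        rcases mem_union.mp h1 with h | h
        · exact absurd h (by tauto)
        · exact h
  have hdisjW : ∀ c ∈ S, ∀ c' ∈ S, c ≠ c' → Disjoint (W c) (W c') := by
    intro c hc c' hc' hne
    rw [Finset.disjoint_left]
    intro X hX hX'
    obtain ⟨x, hx⟩ := hcross c hc c' hc' hne
    rw [mem_inter] at hx
    rw [hW, mem_filter] at hX hX'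
    exact (Finset.disjoint_left.mp hX'.2.2 hx.2) (hX.2.1 hx.1)
  have h1 : S.card * 2 ^ (e - 2 * k) ≤ ∑ c ∈ S, (W c).card := by
    calc S.card * 2 ^ (e - 2 * k) = ∑ _c ∈ S, 2 ^ (e - 2 * k) := by
          rw [sum_const, smul_eq_mul]
      _ ≤ ∑ c ∈ S, (W c).card := sum_le_sum hWle
  have h2 : ∑ c ∈ S, (W c).card = (S.biUnion W).card :=
    (card_biUnion hdisjW).symm
  have h3 : (S.biUnion W).card ≤ U.powerset.card := by
    apply card_le_card
    intro X hX
    rw [mem_biUnion] at hX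
    obtain ⟨c, _, hc⟩ := hX
    exact mem_of_mem_filter _ hc
  have h3' : (S.biUnion W).card ≤ 2 ^ e := by rw [he]; rw [card_powerset] at h3; exact h3
  have h4 : S.card * 2 ^ (e - 2 * k) ≤ 2 ^ e := by omega
  have h5 : (2:ℕ) ^ e ≤ 2 ^ (e - 2 * k) * 2 ^ (2 * k) := by
    rw [← pow_add]
    exact Nat.pow_le_pow_right (by norm_num) (by omega)
  have h6 : S.card * 2 ^ (e - 2 * k) ≤ 2 ^ (2 * k) * 2 ^ (e - 2 * k) := by
    calc S.card * 2 ^ (e - 2 * k) ≤ 2 ^ e := h4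
      _ ≤ 2 ^ (e - 2 * k) * 2 ^ (2 * k) := h5
      _ = 2 ^ (2 * k) * 2 ^ (e - 2 * k) := by ring
  exact Nat.le_of_mul_le_mul_right h6 (by positivity)

end Aux

def vtx (n : ℕ) (c : Fin n) : P12 n := ⟨{c}, Or.inl (Finset.card_singleton c)⟩

def ptx (n : ℕ) (h0 : 0 < n) (c : Fin n) : P12 n :=
  ⟨{⟨0, h0⟩, c}, by
    rcases eq_or_ne (⟨0, h0⟩ : Fin n) c with h | h
    · exact Or.inl (by simp [h])
    · exact Or.inr (Finset.card_pair h)⟩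

lemma not_adj_vtx_ptx (n : ℕ) (h0 : 0 < n) (c : Fin n) :
    ¬ (G12 n).Adj (vtx n c) (ptx n h0 c) := by
  intro h
  rcases h with ⟨h1, h2, h3⟩ | ⟨h1, h2, h3⟩
  · exact h3 (by simp [vtx, ptx])
  · simp [vtx] at h2

lemma adj_vtx_ptx (n : ℕ) (h0 : 0 < n) {c c' : Fin n}
    (hc : c ≠ ⟨0, h0⟩) (hc' : c' ≠ ⟨0, h0⟩) (hne : c ≠ c') :
    (G12 n).Adj (vtx n c) (ptx n h0 c') := by
  left
  refine ⟨by simp [vtx], Finset.card_pair (Ne.symm hc'), ?_⟩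
  simp only [vtx, ptx, Finset.singleton_subset_iff, Finset.mem_insert,
    Finset.mem_singleton]
  push_neg
  exact ⟨hc, hne⟩

open scoped Classical in
lemma key (n k : ℕ) (hn : 2 ≤ n)
    (C : Finset (G12 n).Subgraph)
    (hbc : ∀ G ∈ C, IsCompleteBipartite G.coe)
    (hsup : C.sup id = ⊤)
    (hloc : ∀ w : P12 n, (C.filter fun G => w ∈ G.verts).card ≤ k) :
    n - 1 ≤ 2 ^ (2 * k) := by
  classical
  have h0 : 0 < n := by omega
  simp only [IsCompleteBipartite] at hbc
  choose! A B hAB hABu hAdj using hbc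
  set U : Finset ((G12 n).Subgraph × Bool) := C ×ˢ Finset.univ with hU
  -- card bound helper
  have cardbound : ∀ (w : P12 n) (f : Bool → Bool), Function.Injective f →
      (U.filter fun x => ∃ h : w ∈ x.1.verts,
        (f x.2 = true ∧ (⟨w, h⟩ : x.1.verts) ∈ A x.1) ∨
        (f x.2 = false ∧ (⟨w, h⟩ : x.1.verts) ∈ B x.1)).card ≤ k := by
    intro w f hf
    refine le_trans (Finset.card_le_card_of_injOn Prod.fst ?_ ?_) (hloc w)
    · intro x hx
      rw [Finset.mem_coe, Finset.mem_filter] at hx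
      obtain ⟨hxU, hw, _⟩ := hx
      rw [hU, Finset.mem_product] at hxU
      exact Finset.mem_filter.mpr ⟨hxU.1, hw⟩
    · rintro ⟨G, b⟩ hx ⟨G', b'⟩ hy hxy
      simp only at hxy
      subst hxy
      rw [Finset.mem_coe, Finset.mem_filter] at hx hy
      obtain ⟨hxU, hwx, hsx⟩ := hx
      obtain ⟨hyU, hwy, hsy⟩ := hy
      rw [hU, Finset.mem_product] at hxU
      have hd := hAB G hxU.1
      have hww : (⟨w, hwy⟩ : G.verts) = ⟨w, hwx⟩ := rfl
      rw [hww] at hsy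
      have hfb : f b = f b' := by
        by_contra hne2
        rcases hsx with ⟨hx1, hx2⟩ | ⟨hx1, hx2⟩ <;>
          rcases hsy with ⟨hy1, hy2⟩ | ⟨hy1, hy2⟩
        · exact hne2 (hx1.trans hy1.symm)
        · exact (Set.disjoint_left.mp hd hx2) hy2
        · exact (Set.disjoint_left.mp hd hy2) hx2
        · exact hne2 (hx1.trans hy1.symm)
      exact congrArg (Prod.mk G) (hf hfb)
  set σ : Fin n → Finset ((G12 n).Subgraph × Bool) :=
    fun c => U.filter fun x => ∃ h : vtx n c ∈ x.1.verts,
      (x.2 = true ∧ (⟨vtx n c, h⟩ : x.1.verts) ∈ A x.1) ∨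
      (x.2 = false ∧ (⟨vtx n c, h⟩ : x.1.verts) ∈ B x.1) with hσ
  set τ : Fin n → Finset ((G12 n).Subgraph × Bool) :=
    fun c => U.filter fun x => ∃ h : ptx n h0 c ∈ x.1.verts,
      ((!x.2) = true ∧ (⟨ptx n h0 c, h⟩ : x.1.verts) ∈ A x.1) ∨
      ((!x.2) = false ∧ (⟨ptx n h0 c, h⟩ : x.1.verts) ∈ B x.1) with hτ
  have hσk : ∀ c, (σ c).card ≤ k := by
    intro c
    rw [hσ]
    exact cardbound (vtx n c) (fun b => b) (fun a b h => h)
  have hτk : ∀ c, (τ c).card ≤ k := by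
    intro c
    rw [hτ]
    exact cardbound (ptx n h0 c) (fun b => !b)
      (by intro a b h; cases a <;> cases b <;> simp_all)
  have hdisj : ∀ c : Fin n, Disjoint (σ c) (τ c) := by
    intro c
    rw [Finset.disjoint_left]
    intro x hx hx'
    rw [hσ, Finset.mem_filter] at hx
    rw [hτ, Finset.mem_filter] at hx'
    obtain ⟨hxU, h1, hs1⟩ := hx
    obtain ⟨-, h2, hs2⟩ := hx'
    rw [hU, Finset.mem_product] at hxU
    have hadj : (G12 n).Adj (vtx n c) (ptx n h0 c) := by
      apply x.1.adj_sub (v := vtx n c) (w := ptx n h0 c)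
      have hiff := (hAdj x.1 hxU.1 ⟨vtx n c, h1⟩ ⟨ptx n h0 c, h2⟩).mpr
      apply hiff
      rcases hs1 with ⟨hb, hm⟩ | ⟨hb, hm⟩ <;>
        rcases hs2 with ⟨hb', hm'⟩ | ⟨hb', hm'⟩
      · rw [hb] at hb'; simp at hb'
      · exact Or.inl ⟨hm, hm'⟩
      · exact Or.inr ⟨hm, hm'⟩
      · rw [hb] at hb'; simp at hb'
    exact not_adj_vtx_ptx n h0 c hadj
  have hcross : ∀ c : Fin n, c ≠ ⟨0, h0⟩ → ∀ c' : Fin n, c' ≠ ⟨0, h0⟩ → c ≠ c' →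
      ((σ c) ∩ (τ c')).Nonempty := by
    intro c hc c' hc' hne
    have hadj : (C.sup id).Adj (vtx n c) (ptx n h0 c') := by
      rw [hsup]
      exact adj_vtx_ptx n h0 hc hc' hne
    rw [Finset.sup_id_eq_sSup, Subgraph.sSup_adj] at hadj
    obtain ⟨G, hGC, hG⟩ := hadj
    rw [Finset.mem_coe] at hGC
    have h1 : vtx n c ∈ G.verts := hG.fst_mem
    have h2 : ptx n h0 c' ∈ G.verts := hG.snd_mem
    have hco : G.coe.Adj ⟨vtx n c, h1⟩ ⟨ptx n h0 c', h2⟩ := hG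
    have hmemU : ∀ b : Bool, (G, b) ∈ U := by
      intro b; rw [hU, Finset.mem_product]; exact ⟨hGC, Finset.mem_univ _⟩
    rcases (hAdj G hGC _ _).mp hco with ⟨hA, hB⟩ | ⟨hB, hA⟩
    · refine ⟨(G, true), ?_⟩
      rw [Finset.mem_inter, hσ, hτ, Finset.mem_filter, Finset.mem_filter]
      exact ⟨⟨hmemU true, h1, Or.inl ⟨rfl, hA⟩⟩, hmemU true, h2, Or.inr ⟨rfl, hB⟩⟩
    · refine ⟨(G, false), ?_⟩
      rw [Finset.mem_inter, hσ, hτ, Finset.mem_filter, Finset.mem_filter]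
      exact ⟨⟨hmemU false, h1, Or.inr ⟨rfl, hB⟩⟩, hmemU false, h2, Or.inl ⟨rfl, hA⟩⟩
  have := setpair_bound U k (Finset.univ.erase (⟨0, h0⟩ : Fin n)) σ τ
    (fun c _ => Finset.filter_subset _ _)
    (fun c _ => Finset.filter_subset _ _)
    (fun c _ => hσk c) (fun c _ => hτk c)
    (fun c _ => hdisj c)
    (fun c hc c' hc' h => hcross c (Finset.ne_of_mem_erase hc) c'
      (Finset.ne_of_mem_erase hc') h)
  rwa [Finset.card_erase_of_mem (Finset.mem_univ _), Finset.card_univ,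
    Fintype.card_fin] at this

/-- The subgraph with all vertices and no edges. -/
def fullVertsSubgraph {V : Type*} (G : SimpleGraph V) : G.Subgraph where
  verts := Set.univ
  Adj _ _ := False
  adj_sub := False.elim
  edge_vert := False.elim
  symm := ⟨fun _ _ => False.elim⟩

lemma fullVertsSubgraph_cb {V : Type*} (G : SimpleGraph V) :
    IsCompleteBipartite (fullVertsSubgraph G).coe := by
  refine ⟨Set.univ, ∅, ?_, by simp, ?_⟩
  · simp
  · intro u v
    constructor
    · intro h
      exact absurd h (by exact fun h => h)
    · rintro (⟨-, h⟩ | ⟨h, -⟩) <;> exact absurd h (Set.notMem_empty _)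

lemma subgraphOfAdj_cb {V : Type*} (G : SimpleGraph V) {x y : V} (h : G.Adj x y) :
    IsCompleteBipartite (G.subgraphOfAdj h).coe := by
  refine ⟨{z | z.1 = x}, {z | z.1 = y}, ?_, ?_, ?_⟩
  · rw [Set.disjoint_left]
    rintro z hz hz'
    rw [Set.mem_setOf_eq] at hz hz'
    exact h.ne (hz.symm.trans hz')
  · ext z
    have := z.2
    simp only [subgraphOfAdj_verts, Set.mem_insert_iff, Set.mem_singleton_iff] at this
    simp only [Set.mem_union, Set.mem_setOf_eq, Set.mem_univ, iff_true]
    exact this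
  · intro u v
    simp only [Subgraph.coe_adj, subgraphOfAdj_adj, Sym2.eq, Sym2.rel_iff',
      Prod.mk.injEq, Prod.swap_prod_mk, Set.mem_setOf_eq]
    constructor
    · rintro (⟨h1, h2⟩ | ⟨h1, h2⟩)
      · exact Or.inl ⟨h1.symm, h2.symm⟩
      · exact Or.inr ⟨h2.symm, h1.symm⟩
    · rintro (⟨h1, h2⟩ | ⟨h1, h2⟩)
      · exact Or.inl ⟨h1.symm, h2.symm⟩
      · exact Or.inr ⟨h2.symm, h1.symm⟩

open scoped Classical in
lemma cover_exists {V : Type*} [Fintype V] (G : SimpleGraph V) :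
    ∃ k, ∃ C : Finset G.Subgraph, (∀ H ∈ C, IsCompleteBipartite H.coe) ∧
      C.sup id = ⊤ ∧ ∀ v : V, (C.filter fun H => v ∈ H.verts).card ≤ k := by
  classical
  set E : Finset (V × V) := Finset.univ.filter fun pr => G.Adj pr.1 pr.2 with hE
  have hEadj : ∀ pr ∈ E, G.Adj pr.1 pr.2 := fun pr hpr => (Finset.mem_filter.mp hpr).2
  set C : Finset G.Subgraph :=
    insert (fullVertsSubgraph G)
      (E.attach.image fun pr => G.subgraphOfAdj (hEadj pr.1 pr.2)) with hC
  refine ⟨C.card, C, ?_, ?_, fun v => Finset.card_filter_le _ _⟩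
  · intro H hH
    rw [hC, Finset.mem_insert] at hH
    rcases hH with rfl | hH
    · exact fullVertsSubgraph_cb G
    · obtain ⟨pr, -, rfl⟩ := Finset.mem_image.mp hH
      exact subgraphOfAdj_cb G _
  · apply le_antisymm le_top
    have hF : fullVertsSubgraph G ≤ C.sup id :=
      Finset.le_sup (f := id) (by rw [hC]; exact Finset.mem_insert_self _ _)
    constructor
    · intro z _
      exact hF.1 (Set.mem_univ z)
    · intro a b hab
      have hab' : G.Adj a b := hab
      have hpr : (a, b) ∈ E := by rw [hE, Finset.mem_filter]; exact ⟨Finset.mem_univ _, hab'⟩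
      have hmem : G.subgraphOfAdj (hEadj (a, b) hpr) ∈ C := by
        rw [hC]
        exact Finset.mem_insert_of_mem
          (Finset.mem_image.mpr ⟨⟨(a, b), hpr⟩, Finset.mem_attach _ _, rfl⟩)
      have hle : G.subgraphOfAdj (hEadj (a, b) hpr) ≤ C.sup id :=
        Finset.le_sup (f := id) hmem
      exact hle.2 rfl

open scoped Classical in
lemma cbCN_mem (n : ℕ) :
    ∃ C : Finset (G12 n).Subgraph, (∀ H ∈ C, IsCompleteBipartite H.coe) ∧
      C.sup id = ⊤ ∧
      ∀ v : P12 n, (C.filter fun H => v ∈ H.verts).card ≤ cbCN (G12 n) := by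
  have hne : {k | ∃ C : Finset (G12 n).Subgraph,
      (∀ H ∈ C, IsCompleteBipartite H.coe) ∧ C.sup id = ⊤ ∧
      ∀ v : P12 n, (C.filter fun H => v ∈ H.verts).card ≤ k}.Nonempty := by
    obtain ⟨k, hk⟩ := cover_exists (G12 n)
    exact ⟨k, hk⟩
  have := Nat.sInf_mem hne
  exact this

/-- **Theorem.** For all `n ≥ 2`,
`cn_ℓ(𝔅ℭ, G_{P(1,2;n)}) ≥ (1/2)·log₂(n − 1)`. -/
theorem cbCN_G12_lower_bound (n : ℕ) (hn : 2 ≤ n) :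
    (1 / 2) * Real.logb 2 ((n : ℝ) - 1) ≤ (cbCN (G12 n) : ℝ) := by
  obtain ⟨C, hbc, hsup, hloc⟩ := cbCN_mem n
  have hnat : n - 1 ≤ 2 ^ (2 * cbCN (G12 n)) := key n _ hn C hbc hsup hloc
  set k := cbCN (G12 n)
  have hreal : (n : ℝ) - 1 ≤ 2 ^ (2 * k) := by
    have : ((n - 1 : ℕ) : ℝ) ≤ ((2 ^ (2 * k) : ℕ) : ℝ) := Nat.cast_le.mpr hnat
    push_cast at this
    have h2 : ((n - 1 : ℕ) : ℝ) = (n : ℝ) - 1 := by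
      have : 1 ≤ n := by omega
      push_cast [this]
      ring
    rw [h2] at this
    exact_mod_cast this
  have hlog : Real.logb 2 ((n : ℝ) - 1) ≤ 2 * k := by
    have hpos : (0 : ℝ) < (n : ℝ) - 1 := by
      have : (2 : ℝ) ≤ n := by exact_mod_cast hn
      linarith
    calc Real.logb 2 ((n : ℝ) - 1) ≤ Real.logb 2 ((2 : ℝ) ^ (2 * k)) :=
          Real.logb_le_logb_of_le (by norm_num) hpos hreal
      _ = (2 * k : ℕ) * Real.logb 2 2 := by rw [Real.logb_pow]
      _ = 2 * k := by rw [Real.logb_self_eq_one (by norm_num : (1:ℝ) < 2)]; push_cast; ring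
  linarith
end
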